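/- arXiv:2511.14176 — 2 statements merged into one kernel-verified Lean document; each statement's English description precedes it below -/
import Mathlib

section
/- Fix t₁ < ⋯ < t_n and identify i ∈ [n] with γ_d(t_i). Let T be a triangulation of C(n,d) with vertex set [n] and σ ⊆ [n] a simplex on γ_d. Then: (1) σ ≤_{d+1} T if and only if there are no σ' ⊆ σ with |σ'| = ⌈d/2⌉+1 and no face τ of T with |τ| = ⌊d/2⌋+1 such that τ <_{d+1} σ'; and (2) T ≤_{d+1} σ if and only if there are no σ' ⊆ σ with |σ'| = ⌊d/2⌋+1 and no face τ of T with |τ| = ⌈d/2⌉+1 such that σ' <_{d+1} τ. -/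
open Finset

/-- The moment curve in `ℝ^d`: `γ_d(s) = (s, s², …, s^d)`. -/
def momentCurve (d : ℕ) (s : ℝ) : Fin d → ℝ := fun i => s ^ (i.1 + 1)

/-- The convex hull in `ℝ^d` of the points `γ_d(t i)` for `i ∈ σ`. -/
def mcConv (d : ℕ) {n : ℕ} (t : Fin n → ℝ) (σ : Finset (Fin n)) : Set (Fin d → ℝ) :=
  convexHull ℝ ((fun i => momentCurve d (t i)) '' ↑σ)

/-- Two simplices (given by index sets) overlap in `ℝ^d`:
`conv(σ) ∩ conv(τ) ⊋ conv(σ ∩ τ)`. -/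
def Overlap (d : ℕ) {n : ℕ} (t : Fin n → ℝ) (σ τ : Finset (Fin n)) : Prop :=
  ¬ (mcConv d t σ ∩ mcConv d t τ ⊆ mcConv d t (σ ∩ τ))

/-- Projection `ℝ^{d+1} → ℝ^d` forgetting the last coordinate. -/
def projLast (d : ℕ) (x : Fin (d + 1) → ℝ) : Fin d → ℝ := fun i => x i.castSucc

/-- `h_σ ≤ h_τ` on `conv(σ) ∩ conv(τ)`, phrased via the liftings to `γ_{d+1}`:
any point of the lifted `σ`-simplex lying above a point of the lifted `τ`-simplex
(same projection) has smaller or equal last coordinate. -/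
def HeightLE (d : ℕ) {n : ℕ} (t : Fin n → ℝ) (σ τ : Finset (Fin n)) : Prop :=
  ∀ q ∈ mcConv (d + 1) t σ, ∀ q' ∈ mcConv (d + 1) t τ,
    projLast d q = projLast d q' → q (Fin.last d) ≤ q' (Fin.last d)

/-- `σ <_{d+1} τ`: `σ` and `τ` overlap in `ℝ^d` and `h_σ ≤ h_τ` on the common domain. -/
def HeightLT (d : ℕ) {n : ℕ} (t : Fin n → ℝ) (σ τ : Finset (Fin n)) : Prop :=
  Overlap d t σ τ ∧ HeightLE d t σ τ

/-- A triangulation of `conv(A)` without new vertices: a family of `d`-simplices with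
vertices in `A`, pairwise non-overlapping, whose convex hulls cover `conv(A)`. -/
def IsTriangulation (d : ℕ) {n : ℕ} (t : Fin n → ℝ) (A : Finset (Fin n))
    (T : Finset (Finset (Fin n))) : Prop :=
  (∀ σ ∈ T, σ.card = d + 1 ∧ σ ⊆ A) ∧
  (∀ σ ∈ T, ∀ τ ∈ T, σ ≠ τ → ¬ Overlap d t σ τ) ∧
  (∀ p ∈ mcConv d t A, ∃ σ ∈ T, p ∈ mcConv d t σ)

/-- The triangulation `T` uses every vertex of `A`. -/
def UsesAllVertices {n : ℕ} (A : Finset (Fin n)) (T : Finset (Finset (Fin n))) : Prop :=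
  ∀ a ∈ A, ∃ σ ∈ T, a ∈ σ

/-- `σ` is a face of the triangulation `T`. -/
def IsFaceOf {n : ℕ} (σ : Finset (Fin n)) (T : Finset (Finset (Fin n))) : Prop :=
  ∃ ρ ∈ T, σ ⊆ ρ

/-- An alternating sequence `v₁ < ⋯ < v_k` of type (σ): odd-numbered entries
(0-indexed even positions) in `σ`, even-numbered entries in `τ`. -/
def AltSeq {n : ℕ} (σ τ : Finset (Fin n)) (k : ℕ) : Prop :=
  ∃ v : Fin k → Fin n, StrictMono v ∧
    ∀ i : Fin k, (i.1 % 2 = 0 → v i ∈ σ) ∧ (i.1 % 2 = 1 → v i ∈ τ)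

/-- `σ` and `τ` are `k`-interlacing. -/
def Interlacing {n : ℕ} (σ τ : Finset (Fin n)) (k : ℕ) : Prop :=
  AltSeq σ τ k ∨ AltSeq τ σ k

/-- `σ ≤_{d+1} T`: the height of `σ` is at most that of `T` on `conv(σ)`. -/
def SimplexLE (d : ℕ) {n : ℕ} (t : Fin n → ℝ) (σ : Finset (Fin n))
    (T : Finset (Finset (Fin n))) : Prop :=
  ∀ τ ∈ T, HeightLE d t σ τ

/-- `T ≤_{d+1} σ`: the height of `T` is at most that of `σ` on `conv(σ)`. -/
def TriLE (d : ℕ) {n : ℕ} (t : Fin n → ℝ) (T : Finset (Finset (Fin n)))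
    (σ : Finset (Fin n)) : Prop :=
  ∀ τ ∈ T, HeightLE d t τ σ

section helpers
variable {n : ℕ} {t : Fin n → ℝ}

lemma combo_apply (w : Fin n → ℝ) (d : ℕ) (j : Fin d) :
    (∑ i, w i • momentCurve d (t i)) j = ∑ i, w i * (t i)^(j.1+1) := by
  simp [Finset.sum_apply, momentCurve]

lemma mcConv_mono {d : ℕ} {σ τ : Finset (Fin n)} (h : σ ⊆ τ) :
    mcConv d t σ ⊆ mcConv d t τ :=
  convexHull_mono (Set.image_mono (by exact_mod_cast h))

lemma mem_mcConv {d : ℕ} {σ : Finset (Fin n)} {x : Fin d → ℝ} :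
    x ∈ mcConv d t σ ↔ ∃ w : Fin n → ℝ, (∀ i, 0 ≤ w i) ∧ (∀ i, i ∉ σ → w i = 0) ∧
      (∑ i, w i = 1) ∧ (∑ i, w i • momentCurve d (t i)) = x := by
  classical
  constructor
  · intro hx
    rw [mcConv, _root_.convexHull_eq] at hx
    obtain ⟨ι, s, w, z, hw0, hw1, hz, hcm⟩ := hx
    have hsne : s.Nonempty := by
      by_contra hs
      rw [Finset.not_nonempty_iff_eq_empty] at hs
      simp [hs] at hw1
    obtain ⟨i₀, hi₀⟩ := hsne
    obtain ⟨j₀, hj₀, hj₀z⟩ := hz i₀ hi₀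
    have hk : ∀ i : ι, ∃ j : Fin n, i ∈ s → (j ∈ σ ∧ momentCurve d (t j) = z i) := by
      intro i
      by_cases hi : i ∈ s
      · obtain ⟨j, hj, hjz⟩ := hz i hi
        exact ⟨j, fun _ => ⟨by exact_mod_cast hj, hjz⟩⟩
      · exact ⟨j₀, fun h => absurd h hi⟩
    choose k hkspec using hk
    refine ⟨fun j => ∑ i ∈ s.filter (fun i => k i = j), w i, ?_, ?_, ?_, ?_⟩
    · intro j
      exact Finset.sum_nonneg fun i hi => hw0 i (Finset.mem_filter.1 hi).1
    · intro j hj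
      apply Finset.sum_eq_zero
      intro i hi
      obtain ⟨his, hki⟩ := Finset.mem_filter.1 hi
      exact absurd (hki ▸ (hkspec i his).1) hj
    · rw [Finset.sum_fiberwise s k w]; exact hw1
    · have key : ∀ j : Fin n, (∑ i ∈ s.filter (fun i => k i = j), w i) • momentCurve d (t j)
          = ∑ i ∈ s.filter (fun i => k i = j), w i • z i := by
        intro j
        rw [Finset.sum_smul]
        apply Finset.sum_congr rfl
        intro i hi
        obtain ⟨his, hki⟩ := Finset.mem_filter.1 hi
        rw [← (hkspec i his).2, hki]
      calc (∑ j, (∑ i ∈ s.filter (fun i => k i = j), w i) • momentCurve d (t j))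
          = ∑ j, ∑ i ∈ s.filter (fun i => k i = j), w i • z i := by
            exact Finset.sum_congr rfl fun j _ => key j
        _ = ∑ i ∈ s, w i • z i := Finset.sum_fiberwise s k (fun i => w i • z i)
        _ = x := by rw [← Finset.centerMass_eq_of_sum_1 s z hw1]; exact hcm
  · rintro ⟨w, hw0, hwsupp, hw1, hsum⟩
    have h1 : ∑ i ∈ σ, w i = 1 := by
      rw [← hw1]
      exact Finset.sum_subset (Finset.subset_univ σ) (fun i _ hi => hwsupp i hi)
    have hx : x = σ.centerMass w (fun i => momentCurve d (t i)) := by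
      rw [Finset.centerMass_eq_of_sum_1 _ _ h1, ← hsum]
      exact (Finset.sum_subset (Finset.subset_univ σ)
        (fun i _ hi => by rw [hwsupp i hi, zero_smul])).symm
    rw [hx]
    exact Finset.centerMass_mem_convexHull σ (fun i _ => hw0 i) (by rw [h1]; norm_num)
      (fun i hi => Set.mem_image_of_mem _ (by exact_mod_cast hi))

end helpers

section moments
variable {n : ℕ} {t : Fin n → ℝ}

lemma prod_moment (d : ℕ) (ν : Fin n → ℝ)
    (hmom : ∀ m ≤ d, ∑ i, ν i * t i ^ m = 0)
    (F : Finset ℕ) (r : ℕ → ℝ) :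
    ∀ j : ℕ, j + F.card ≤ d + 1 →
      ∑ i, ν i * (t i ^ j * ∏ a ∈ F, (t i - r a)) =
        if j + F.card = d + 1 then ∑ i, ν i * t i ^ (d+1) else 0 := by
  classical
  induction F using Finset.induction_on with
  | empty =>
      intro j hj
      simp only [Finset.prod_empty, mul_one, Finset.card_empty, add_zero] at *
      rcases Nat.lt_or_ge j (d+1) with h | h
      · rw [if_neg (by omega), hmom j (by omega)]
      · have hje : j = d+1 := by omega
        rw [if_pos hje, hje]
  | @insert a F' ha ih =>
      intro j hj
      have hcard : (insert a F').card = F'.card + 1 := Finset.card_insert_of_notMem ha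
      have hsplit : ∀ i : Fin n, ν i * (t i ^ j * ∏ x ∈ insert a F', (t i - r x)) =
          ν i * (t i ^ (j+1) * ∏ x ∈ F', (t i - r x)) -
          r a * (ν i * (t i ^ j * ∏ x ∈ F', (t i - r x))) := by
        intro i; rw [Finset.prod_insert ha]; ring
      rw [hcard] at hj
      rw [Finset.sum_congr rfl (fun i _ => hsplit i), Finset.sum_sub_distrib, ← Finset.mul_sum]
      rw [ih (j+1) (by omega), ih j (by omega)]
      rw [if_neg (show ¬(j + F'.card = d+1) by omega), mul_zero, sub_zero, hcard,
        show j + 1 + F'.card = j + (F'.card + 1) from by omega]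

lemma vanish_of_small_support (ht : StrictMono t) (e : ℕ) (ν : Fin n → ℝ)
    (S : Finset (Fin n)) (hcard : S.card ≤ e + 1)
    (hsupp : ∀ i, i ∉ S → ν i = 0)
    (hmom : ∀ m, m ≤ e → ∑ i, ν i * t i ^ m = 0) : ∀ i, ν i = 0 := by
  classical
  intro i₀
  by_cases hi₀ : i₀ ∈ S
  swap
  · exact hsupp _ hi₀
  set p := Lagrange.basis S t i₀ with hp
  have hinj : Set.InjOn t ↑S := ht.injective.injOn
  have hdeg : p.natDegree = S.card - 1 := Lagrange.natDegree_basis hinj hi₀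
  have hev : ∑ i, ν i * p.eval (t i) = ν i₀ := by
    rw [← Finset.sum_subset (Finset.subset_univ S)
      (fun i _ hi => by rw [hsupp i hi, zero_mul])]
    rw [Finset.sum_eq_single i₀
      (fun j hj hji => by rw [Lagrange.eval_basis_of_ne (Ne.symm hji) hj, mul_zero])
      (fun h => absurd hi₀ h)]
    rw [Lagrange.eval_basis_self hinj hi₀, mul_one]
  have hz : ∑ i, ν i * p.eval (t i) = 0 := by
    have heval : ∀ i : Fin n,
        p.eval (t i) = ∑ m ∈ Finset.range (p.natDegree + 1), p.coeff m * (t i)^m :=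
      fun i => Polynomial.eval_eq_sum_range _
    calc ∑ i, ν i * p.eval (t i)
        = ∑ i, ∑ m ∈ Finset.range (p.natDegree + 1), p.coeff m * (ν i * (t i)^m) := by
          refine Finset.sum_congr rfl fun i _ => ?_
          rw [heval i, Finset.mul_sum]
          exact Finset.sum_congr rfl fun m _ => by ring
      _ = ∑ m ∈ Finset.range (p.natDegree + 1), p.coeff m * ∑ i, ν i * (t i)^m := by
          rw [Finset.sum_comm]
          exact Finset.sum_congr rfl fun m _ => by rw [Finset.mul_sum]
      _ = 0 := by
          apply Finset.sum_eq_zero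
          intro m hm
          have hm' : m ≤ e := by
            have := Finset.mem_range.1 hm
            have h1 : S.card ≥ 1 := Finset.card_pos.2 ⟨i₀, hi₀⟩
            omega
          rw [hmom m hm', mul_zero]
  rw [hz] at hev
  exact hev.symm

end moments

namespace AltAux

lemma sign_flip {C x y : ℝ} (h1 : 0 < C * x) (h2 : x * y < 0) : 0 < -C * y := by
  rcases mul_pos_iff.1 h1 with ⟨hC, hx⟩ | ⟨hC, hx⟩ <;>
    rcases mul_neg_iff.1 h2 with ⟨hx', hy⟩ | ⟨hx', hy⟩
  · exact mul_pos_of_neg_of_neg (by linarith) hy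
  · linarith
  · linarith
  · exact mul_pos (by linarith) hy

lemma sign_keep {C x y : ℝ} (h1 : 0 < C * x) (h2 : 0 < x * y) : 0 < C * y := by
  rcases mul_pos_iff.1 h1 with ⟨hC, hx⟩ | ⟨hC, hx⟩ <;>
    rcases mul_pos_iff.1 h2 with ⟨hx', hy⟩ | ⟨hx', hy⟩
  · exact mul_pos hC hy
  · linarith
  · linarith
  · exact mul_pos_of_neg_of_neg hC hy

variable (w : ℕ → ℝ)

noncomputable def gfn (i : ℕ) : ℕ :=
  1 + ((Finset.range i).filter (fun j => w j * w (j+1) < 0)).card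

lemma gfn_zero : gfn w 0 = 1 := by simp [gfn]

lemma gfn_succ (i : ℕ) :
    gfn w (i+1) = gfn w i + (if w i * w (i+1) < 0 then 1 else 0) := by
  unfold gfn
  rw [Finset.range_add_one, Finset.filter_insert]
  by_cases h : w i * w (i+1) < 0
  · rw [if_pos h, if_pos h, Finset.card_insert_of_notMem
      (fun hmem => by simpa using (Finset.mem_filter.1 hmem).1)]
    omega
  · rw [if_neg h, if_neg h, add_zero]

lemma gfn_mono : Monotone (gfn w) := by
  intro i k h
  unfold gfn
  have : (Finset.range i).filter (fun j => w j * w (j+1) < 0) ⊆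
      (Finset.range k).filter (fun j => w j * w (j+1) < 0) :=
    Finset.filter_subset_filter _ (Finset.range_subset_range.2 h)
  exact Nat.add_le_add_left (Finset.card_le_card this) 1

lemma gfn_one_le (i : ℕ) : 1 ≤ gfn w i := Nat.le_add_right 1 _

lemma gfn_le (i : ℕ) : gfn w i ≤ i + 1 := by
  unfold gfn
  have := Finset.card_le_card (Finset.filter_subset (fun j => w j * w (j+1) < 0) (Finset.range i))
  simp only [Finset.card_range] at this
  omega

lemma gfn_surj (i v : ℕ) (h1 : 1 ≤ v) (h2 : v ≤ gfn w i) : ∃ j, j ≤ i ∧ gfn w j = v := by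
  induction i with
  | zero =>
      rw [gfn_zero] at h2
      exact ⟨0, le_refl 0, by rw [gfn_zero]; omega⟩
  | succ i ih =>
      by_cases hv : v ≤ gfn w i
      · obtain ⟨j, hj, hgj⟩ := ih hv
        exact ⟨j, Nat.le_succ_of_le hj, hgj⟩
      · have hstep := gfn_succ w i
        have : gfn w (i+1) ≤ gfn w i + 1 := by rw [hstep]; split <;> omega
        exact ⟨i+1, le_refl _, by omega⟩

lemma gfn_sign (m : ℕ) (hw : ∀ j, j < m → w j ≠ 0) :
    ∀ i, i < m → 0 < (if 0 < w 0 then (-1:ℝ) else 1) * (-1)^(gfn w i) * w i := by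
  set c0 : ℝ := if 0 < w 0 then (-1:ℝ) else 1 with hc0
  intro i
  induction i with
  | zero =>
      intro h
      rw [gfn_zero, pow_one]
      by_cases h0 : 0 < w 0
      · rw [hc0, if_pos h0]; nlinarith
      · have hne := hw 0 h
        have hneg : w 0 < 0 := lt_of_le_of_ne (not_lt.1 h0) hne
        rw [hc0, if_neg h0]; nlinarith
  | succ i ih =>
      intro h
      have hi : i < m := Nat.lt_of_succ_lt h
      have H := ih hi
      rw [gfn_succ]
      by_cases hf : w i * w (i+1) < 0
      · rw [if_pos hf, pow_succ]
        have := sign_flip H hf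
        calc (0:ℝ) < -(c0 * (-1)^(gfn w i)) * w (i+1) := this
          _ = c0 * ((-1)^(gfn w i) * -1) * w (i+1) := by ring
      · rw [if_neg hf, add_zero]
        have hprod : 0 < w i * w (i+1) := by
          rcases lt_or_gt_of_ne (mul_ne_zero (hw i hi) (hw (i+1) h)) with h' | h'
          · exact absurd h' hf
          · exact h'
        exact sign_keep H hprod

end AltAux

section alt
variable {n : ℕ} {t : Fin n → ℝ}

open AltAux in
lemma alt_exists (ht : StrictMono t) (d : ℕ) (ν : Fin n → ℝ)
    (hmom : ∀ m, m ≤ d → ∑ i, ν i * t i ^ m = 0)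
    (hne : ∃ i, ν i ≠ 0) :
    ∃ (e : Fin (d+2) → Fin n) (s : ℝ), StrictMono e ∧ (s = 1 ∨ s = -1) ∧
      (∀ i : Fin (d+2), 0 < s * (-1)^(i.1 : ℕ) * ν (e i)) ∧
      (0 < ∑ i, ν i * t i ^ (d+1) → s = (-1)^(d+1)) ∧
      ((Finset.univ.filter fun k => ν k ≠ 0).card ≤ d + 2 →
        0 < s * (-1)^(d+1) * ∑ i, ν i * t i ^ (d+1)) := by
  classical
  set cval := ∑ i, ν i * t i ^ (d+1) with hcval
  set S := Finset.univ.filter (fun k => ν k ≠ 0) with hSdef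
  obtain ⟨i₁, hi₁⟩ := hne
  have hSne : S.Nonempty := ⟨i₁, by simp [hSdef, hi₁]⟩
  set m := S.card with hmdef
  have hm1 : 1 ≤ m := Finset.card_pos.2 hSne
  set EI := S.orderIsoOfFin rfl with hEIdef
  set idx : ℕ → Fin n := fun j => (EI ⟨min j (m-1), by omega⟩ : {x // x ∈ S}).1 with hidxdef
  have hidx : ∀ j (hj : j < m), idx j = ((EI ⟨j, hj⟩ : {x // x ∈ S}) : Fin n) := by
    intro j hj
    have hfin : (⟨min j (m-1), by omega⟩ : Fin m) = ⟨j, hj⟩ := Fin.ext (by simp; omega)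
    simp only [hidxdef, hfin]
  have hidxS : ∀ j, idx j ∈ S := fun j => (EI _).2
  have hidxmono : ∀ j k, j < m → k < m → j < k → idx j < idx k := by
    intro j k hj hk hjk
    rw [hidx j hj, hidx k hk]
    exact Subtype.coe_lt_coe.2 (EI.lt_iff_lt.2 hjk)
  set w : ℕ → ℝ := fun j => ν (idx j) with hwdef
  set u : ℕ → ℝ := fun j => t (idx j) with hudef
  have hwne : ∀ j, j < m → w j ≠ 0 := by
    intro j _
    have := hidxS j
    rw [hSdef, Finset.mem_filter] at this
    exact this.2
  have humono : ∀ j k, j < k → k < m → u j < u k := by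
    intro j k hjk hk
    exact ht (hidxmono j k (lt_trans hjk hk) hk hjk)
  set L := gfn w (m-1) with hLdef
  set c0 : ℝ := if 0 < w 0 then (-1:ℝ) else 1 with hc0def
  have hc0pm : c0 = 1 ∨ c0 = -1 := by
    rw [hc0def]; split
    · exact Or.inr rfl
    · exact Or.inl rfl
  have hsgn : ∀ i, i < m → 0 < c0 * (-1)^(gfn w i) * w i := by
    have := gfn_sign w m hwne
    rw [← hc0def] at this
    exact this
  set F := (Finset.range (m-1)).filter (fun j => w j * w (j+1) < 0) with hFdef
  have hFL : L = 1 + F.card := rfl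
  set r : ℕ → ℝ := fun j => (u j + u (j+1))/2 with hrdef
  have hFmem : ∀ j ∈ F, j < m - 1 := by
    intro j hj
    rw [hFdef, Finset.mem_filter, Finset.mem_range] at hj
    exact hj.1
  have hr_between : ∀ j ∈ F, u j < r j ∧ r j < u (j+1) := by
    intro j hj
    have hjm := hFmem j hj
    have : u j < u (j+1) := humono j (j+1) (by omega) (by omega)
    constructor
    · rw [hrdef]; dsimp only; linarith
    · rw [hrdef]; dsimp only; linarith
  have hfac_pos : ∀ k, k < m → ∀ j ∈ F, j < k → 0 < u k - r j := by
    intro k hk j hj hjk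
    have hjm := hFmem j hj
    have h1 := (hr_between j hj).2
    have h2 : u (j+1) ≤ u k := by
      rcases eq_or_lt_of_le (show j + 1 ≤ k by omega) with h | h
      · rw [h]
      · exact le_of_lt (humono (j+1) k h hk)
    linarith
  have hfac_neg : ∀ k, k < m → ∀ j ∈ F, k ≤ j → u k - r j < 0 := by
    intro k hk j hj hkj
    have hjm := hFmem j hj
    have h1 := (hr_between j hj).1
    have h2 : u k ≤ u j := by
      rcases eq_or_lt_of_le hkj with h | h
      · rw [h]
      · exact le_of_lt (humono k j h (by omega))
    linarith
  have hQ : ∀ k, k < m →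
      0 < (-1:ℝ)^((F.filter (fun j => k ≤ j)).card) * ∏ j ∈ F, (u k - r j) := by
    intro k hk
    rw [← Finset.prod_filter_mul_prod_filter_not F (fun j => k ≤ j)]
    set c := (F.filter (fun j => k ≤ j)).card with hcdef
    have h2 : 0 < ∏ j ∈ F.filter (fun j => ¬ k ≤ j), (u k - r j) :=
      Finset.prod_pos (fun j hj => hfac_pos k hk j (Finset.mem_filter.1 hj).1
        (not_le.1 (Finset.mem_filter.1 hj).2))
    have h3 : 0 < ∏ j ∈ F.filter (fun j => k ≤ j), (r j - u k) :=
      Finset.prod_pos (fun j hj => by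
        have := hfac_neg k hk j (Finset.mem_filter.1 hj).1 (Finset.mem_filter.1 hj).2
        linarith)
    have h1 : ∏ j ∈ F.filter (fun j => k ≤ j), (u k - r j)
        = (-1:ℝ)^c * ∏ j ∈ F.filter (fun j => k ≤ j), (r j - u k) := by
      calc ∏ j ∈ F.filter (fun j => k ≤ j), (u k - r j)
          = ∏ j ∈ F.filter (fun j => k ≤ j), ((-1) * (r j - u k)) :=
            Finset.prod_congr rfl (fun j _ => by ring)
        _ = (∏ _j ∈ F.filter (fun j => k ≤ j), (-1:ℝ)) *
              ∏ j ∈ F.filter (fun j => k ≤ j), (r j - u k) := Finset.prod_mul_distrib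
        _ = (-1:ℝ)^c * ∏ j ∈ F.filter (fun j => k ≤ j), (r j - u k) := by
            rw [Finset.prod_const]
    rw [h1]
    have hsq : (-1:ℝ)^c * (-1)^c = 1 := by
      rw [← pow_add]
      exact Even.neg_one_pow ⟨c, rfl⟩
    have : (-1:ℝ)^c * ((-1)^c * (∏ j ∈ F.filter (fun j => k ≤ j), (r j - u k)) *
        ∏ j ∈ F.filter (fun j => ¬ k ≤ j), (u k - r j)) =
        ((-1:ℝ)^c * (-1)^c) * ((∏ j ∈ F.filter (fun j => k ≤ j), (r j - u k)) *
        ∏ j ∈ F.filter (fun j => ¬ k ≤ j), (u k - r j)) := by ring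
    rw [this, hsq, one_mul]
    exact mul_pos h3 h2
  have hcnt : ∀ k, k < m → (F.filter (fun j => k ≤ j)).card = L - gfn w k := by
    intro k hk
    have hid : F.filter (fun j => ¬ k ≤ j) =
        (Finset.range k).filter (fun j => w j * w (j+1) < 0) := by
      ext j
      rw [hFdef]
      simp only [Finset.mem_filter, Finset.mem_range, not_le]
      constructor
      · rintro ⟨⟨_, hfl⟩, hjk⟩; exact ⟨hjk, hfl⟩
      · rintro ⟨hjk, hfl⟩; exact ⟨⟨by omega, hfl⟩, hjk⟩
    have hsplitc := Finset.card_filter_add_card_filter_not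
      (s := F) (p := fun j => k ≤ j)
    have h2 : (F.filter (fun j => ¬ k ≤ j)).card = gfn w k - 1 := by
      rw [hid]
      have : gfn w k = 1 + ((Finset.range k).filter (fun j => w j * w (j+1) < 0)).card := rfl
      omega
    have h1le := gfn_one_le w k
    omega
  have hterm : ∀ k, k < m → 0 < c0 * (-1)^L * (w k * ∏ j ∈ F, (u k - r j)) := by
    intro k hk
    have h1 := hsgn k hk
    have h2 := hQ k hk
    rw [hcnt k hk] at h2
    have hgle : gfn w k ≤ L := gfn_mono w (by omega : k ≤ m - 1)
    have hpow : (-1:ℝ)^(gfn w k) * (-1)^(L - gfn w k) = (-1)^L := by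
      rw [← pow_add]; congr 1; omega
    have hmp := mul_pos h1 h2
    have heq : (c0 * (-1)^(gfn w k) * w k) * ((-1:ℝ)^(L - gfn w k) * ∏ j ∈ F, (u k - r j))
        = (c0 * ((-1:ℝ)^(gfn w k) * (-1)^(L - gfn w k))) * (w k * ∏ j ∈ F, (u k - r j)) := by
      ring
    rw [heq, hpow] at hmp
    calc (0:ℝ) < (c0 * (-1:ℝ)^L) * (w k * ∏ j ∈ F, (u k - r j)) := hmp
      _ = c0 * (-1)^L * (w k * ∏ j ∈ F, (u k - r j)) := by ring
  have hsum_pos : 0 < c0 * (-1)^L * ∑ k ∈ Finset.range m, (w k * ∏ j ∈ F, (u k - r j)) := by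
    rw [Finset.mul_sum]
    exact Finset.sum_pos (fun k hk => hterm k (Finset.mem_range.1 hk))
      ⟨0, Finset.mem_range.2 (by omega)⟩
  have htrans : ∑ k ∈ Finset.range m, (w k * ∏ j ∈ F, (u k - r j))
      = ∑ i, ν i * ∏ j ∈ F, (t i - r j) := by
    rw [← Fin.sum_univ_eq_sum_range (fun k => w k * ∏ j ∈ F, (u k - r j)) m]
    rw [← Finset.sum_subset (Finset.subset_univ S) (fun i _ hi => by
      have : ν i = 0 := by
        by_contra hcon
        exact hi (by rw [hSdef, Finset.mem_filter]; exact ⟨Finset.mem_univ i, hcon⟩)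
      rw [this, zero_mul])]
    rw [← Finset.sum_coe_sort S (fun i => ν i * ∏ j ∈ F, (t i - r j))]
    rw [← Equiv.sum_comp EI.toEquiv (fun x : {x // x ∈ S} => ν x.1 * ∏ j ∈ F, (t x.1 - r j))]
    apply Finset.sum_congr rfl
    intro k _
    have h1 : idx k.1 = (EI ⟨k.1, k.2⟩ : {x // x ∈ S}).1 := hidx k.1 k.2
    simp only [hwdef, hudef, h1, Fin.eta]
    rfl
  have heval : F.card ≤ d + 1 →
      ∑ i, ν i * ∏ j ∈ F, (t i - r j) = if F.card = d+1 then cval else 0 := by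
    intro h
    have := prod_moment d ν hmom F r 0 (by omega)
    simp only [pow_zero, one_mul, zero_add] at this
    rw [this, hcval]
  have hL2 : d + 2 ≤ L := by
    by_contra hcon
    push_neg at hcon
    have h0 := heval (by omega)
    rw [if_neg (by omega)] at h0
    rw [htrans, h0, mul_zero] at hsum_pos
    exact lt_irrefl 0 hsum_pos
  have hLm : L ≤ m := by
    have := gfn_le w (m-1)
    omega
  have e1 : (-1:ℝ)^(d+1) = -(-1:ℝ)^d := by rw [pow_succ]; ring
  have e2 : (-1:ℝ)^(d+2) = (-1:ℝ)^d := by rw [pow_succ, pow_succ]; ring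
  have hppm : (-1:ℝ)^d = 1 ∨ (-1:ℝ)^d = -1 := neg_one_pow_eq_or ℝ d
  obtain ⟨a, ha1, haL, hkey1, hkey2⟩ : ∃ a : ℕ, 1 ≤ a ∧ a + (d+1) ≤ L ∧
      (0 < cval → c0 * (-1:ℝ)^a = (-1:ℝ)^(d+1)) ∧
      (m ≤ d + 2 → 0 < c0 * (-1:ℝ)^a * (-1:ℝ)^(d+1) * cval) := by
    rcases eq_or_lt_of_le hL2 with hLeq | hLgt
    · refine ⟨1, le_refl 1, by omega, ?_, ?_⟩
      all_goals {
        have hFc : F.card = d+1 := by omega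
        have hsum := hsum_pos
        rw [htrans, heval (by omega), if_pos hFc, ← hLeq, e2] at hsum
        first
        | (intro hcpos
           rcases hc0pm with hc | hc <;> rcases hppm with hpp | hpp <;>
             rw [hc, hpp] at hsum ⊢ <;> rw [e1, hpp] <;> norm_num <;> nlinarith)
        | (intro _
           rw [e1]
           rcases hc0pm with hc | hc <;> rcases hppm with hpp | hpp <;>
             rw [hc, hpp] at hsum ⊢ <;> norm_num at hsum ⊢ <;> nlinarith) }
    · have hnm : ¬ (m ≤ d+2) := by omega
      by_cases hc : c0 = (-1:ℝ)^d
      · refine ⟨1, le_refl 1, by omega, fun _ => ?_, fun h => absurd h hnm⟩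
        rw [hc, e1, pow_one]; ring
      · refine ⟨2, by omega, by omega, fun _ => ?_, fun h => absurd h hnm⟩
        have hcm : c0 = -(-1:ℝ)^d := by
          rcases hc0pm with h | h <;> rcases hppm with hpp | hpp <;>
            rw [h, hpp] at hc ⊢ <;> norm_num at hc <;> norm_num
        rw [hcm, e1]; norm_num
  have Hv : ∀ i : Fin (d+2), ∃ j, j < m ∧ gfn w j = a + i.1 := by
    intro i
    have hi := i.isLt
    obtain ⟨j, hj, hgj⟩ := gfn_surj w (m-1) (a + i.1) (by omega) (by rw [← hLdef]; omega)
    exact ⟨j, by omega, hgj⟩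
  choose pick hpick1 hpick2 using Hv
  have hpickmono : ∀ i i' : Fin (d+2), i < i' → pick i < pick i' := by
    intro i i' hii'
    by_contra hcon
    push_neg at hcon
    have := gfn_mono w hcon
    rw [hpick2 i, hpick2 i'] at this
    have : i'.1 ≤ i.1 := by omega
    exact absurd (Fin.lt_iff_val_lt_val.1 hii') (by omega)
  refine ⟨fun i => idx (pick i), c0 * (-1:ℝ)^a, ?_, ?_, ?_, hkey1, ?_⟩
  · intro i i' hii'
    exact hidxmono _ _ (hpick1 i) (hpick1 i') (hpickmono i i' hii')
  · rcases hc0pm with h | h <;> rcases neg_one_pow_eq_or ℝ a with hpp | hpp <;>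
      rw [h, hpp] <;> norm_num
  · intro i
    have h := hsgn (pick i) (hpick1 i)
    rw [hpick2 i] at h
    have heq : c0 * (-1:ℝ)^(a + i.1) * w (pick i)
        = (c0 * (-1:ℝ)^a) * (-1:ℝ)^(i.1) * w (pick i) := by
      rw [pow_add]; ring
    rw [heq] at h
    exact h
  · intro hcard
    exact hkey2 (by omega)
end alt

section cards

lemma range_parity_card (r : ℕ) (hr : r < 2) : ∀ k : ℕ,
    ((Finset.range k).filter (fun j => j % 2 = r)).card = (if r = 0 then (k+1)/2 else k/2) := by
  intro k
  induction k with
  | zero => simp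
  | succ k ih =>
      rw [Finset.range_add_one, Finset.filter_insert]
      by_cases h : k % 2 = r
      · rw [if_pos h, Finset.card_insert_of_notMem (fun hmem => by
          simpa using (Finset.mem_filter.1 hmem).1), ih]
        split <;> omega
      · rw [if_neg h, ih]
        split <;> omega

lemma fin_parity_card (d c : ℕ) (hc : c < 2) :
    ((Finset.univ : Finset (Fin (d+2))).filter (fun i => (d+1+i.1) % 2 = c)).card
      = ((Finset.range (d+2)).filter (fun j => (d+1+j) % 2 = c)).card := by
  apply Finset.card_bij (fun (i : Fin (d+2)) _ => i.1)
  · intro i hi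
    rw [Finset.mem_filter] at hi ⊢
    exact ⟨Finset.mem_range.2 i.isLt, hi.2⟩
  · intro i _ i' _ h
    exact Fin.ext h
  · intro j hj
    rw [Finset.mem_filter, Finset.mem_range] at hj
    exact ⟨⟨j, hj.1⟩, Finset.mem_filter.2 ⟨Finset.mem_univ _, hj.2⟩, rfl⟩

lemma parity_filter_cards (d : ℕ) :
    ((Finset.univ : Finset (Fin (d+2))).filter (fun i => (d+1+i.1) % 2 = 0)).card
        = (d+1)/2 + 1 ∧
    ((Finset.univ : Finset (Fin (d+2))).filter (fun i => (d+1+i.1) % 2 = 1)).card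
        = d/2 + 1 := by
  have h0 := fin_parity_card d 0 (by omega)
  have h1 := fin_parity_card d 1 (by omega)
  have e0 : (Finset.range (d+2)).filter (fun j => (d+1+j) % 2 = 0)
      = (Finset.range (d+2)).filter (fun j => j % 2 = (d+1) % 2) := by
    apply Finset.filter_congr
    intro j _
    constructor <;> intro h <;> omega
  have e1 : (Finset.range (d+2)).filter (fun j => (d+1+j) % 2 = 1)
      = (Finset.range (d+2)).filter (fun j => j % 2 = d % 2) := by
    apply Finset.filter_congr
    intro j _
    constructor <;> intro h <;> omega
  rcases Nat.even_or_odd d with hd | hd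
  · have hd2 : d % 2 = 0 := Nat.even_iff.1 hd
    have hd12 : (d+1) % 2 = 1 := by omega
    rw [h0, e0, hd12, range_parity_card 1 (by omega)]
    rw [h1, e1, hd2, range_parity_card 0 (by omega)]
    constructor <;> simp <;> omega
  · have hd2 : d % 2 = 1 := Nat.odd_iff.1 hd
    have hd12 : (d+1) % 2 = 0 := by omega
    rw [h0, e0, hd12, range_parity_card 0 (by omega)]
    rw [h1, e1, hd2, range_parity_card 1 (by omega)]
    constructor <;> simp <;> omega

end cards

section mainlemmas
variable {n : ℕ} {t : Fin n → ℝ}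

lemma neg_one_pow_even' {k : ℕ} (h : k % 2 = 0) : ((-1:ℝ))^k = 1 :=
  Even.neg_one_pow (Nat.even_iff.2 h)

lemma neg_one_pow_odd' {k : ℕ} (h : k % 2 = 1) : ((-1:ℝ))^k = -1 :=
  Odd.neg_one_pow (Nat.odd_iff.2 h)

lemma heightLT_of_alt (ht : StrictMono t) (d : ℕ) (e : Fin (d+2) → Fin n)
    (he : StrictMono e) :
    HeightLT d t ((Finset.univ.filter fun i : Fin (d+2) => (d+1+i.1) % 2 = 1).image e)
      ((Finset.univ.filter fun i : Fin (d+2) => (d+1+i.1) % 2 = 0).image e) := by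
  classical
  have hinj : Function.Injective e := he.injective
  set P := (Finset.univ.filter fun i : Fin (d+2) => (d+1+i.1) % 2 = 0).image e with hPdef
  set N := (Finset.univ.filter fun i : Fin (d+2) => (d+1+i.1) % 2 = 1).image e with hNdef
  have hPsub : P ⊆ Finset.univ.image e := by
    rw [hPdef]; exact Finset.image_subset_image (Finset.filter_subset _ _)
  have hNsub : N ⊆ Finset.univ.image e := by
    rw [hNdef]; exact Finset.image_subset_image (Finset.filter_subset _ _)
  have hnli : ¬ LinearIndependent ℝ
      (fun i : Fin (d+2) => (Fin.cons (1:ℝ) (momentCurve d (t (e i))) : Fin (d+1) → ℝ)) := by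
    intro hli
    have hcard := hli.fintype_card_le_finrank
    rw [Module.finrank_pi ℝ] at hcard
    simp only [Fintype.card_fin] at hcard
    omega
  obtain ⟨g, hg0, i₀, hgi₀⟩ := Fintype.not_linearIndependent_iff.1 hnli
  have hgsum : ∑ i, g i = 0 := by
    have h := congrFun hg0 0
    simpa [Finset.sum_apply, Fin.cons_zero] using h
  have hgmom : ∀ m, 1 ≤ m → m ≤ d → ∑ i, g i * (t (e i))^m = 0 := by
    intro m h1 h2
    have h := congrFun hg0 (Fin.succ ⟨m-1, by omega⟩)
    simp only [Finset.sum_apply, Pi.smul_apply, Fin.cons_succ, momentCurve,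
      smul_eq_mul, Pi.zero_apply] at h
    have hexp : m - 1 + 1 = m := by omega
    rw [hexp] at h
    exact h
  set ω : Fin n → ℝ := fun k => ∑ i, if e i = k then g i else 0 with hωdef
  have hωat : ∀ i, ω (e i) = g i := by
    intro i
    rw [hωdef]
    dsimp only
    calc ∑ i', (if e i' = e i then g i' else 0)
        = ∑ i', (if i' = i then g i' else 0) :=
          Finset.sum_congr rfl (fun i' _ => by simp [hinj.eq_iff])
      _ = g i := by rw [Finset.sum_ite_eq' Finset.univ i g, if_pos (Finset.mem_univ i)]
  have hωoff : ∀ k, k ∉ Finset.univ.image e → ω k = 0 := by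
    intro k hk
    rw [hωdef]
    dsimp only
    apply Finset.sum_eq_zero
    intro i _
    rw [if_neg (fun h => hk (Finset.mem_image.2 ⟨i, Finset.mem_univ i, h⟩))]
  have hωmomgen : ∀ m : ℕ, ∑ k, ω k * t k ^ m = ∑ i, g i * (t (e i))^m := by
    intro m
    rw [hωdef]
    dsimp only
    calc ∑ k, (∑ i, if e i = k then g i else 0) * t k ^ m
        = ∑ k, ∑ i, (if e i = k then g i * t k ^ m else 0) := by
          apply Finset.sum_congr rfl
          intro k _
          rw [Finset.sum_mul]
          exact Finset.sum_congr rfl (fun i _ => by rw [ite_mul, zero_mul])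
      _ = ∑ i, ∑ k, (if e i = k then g i * t k ^ m else 0) := Finset.sum_comm
      _ = ∑ i, g i * (t (e i))^m := by
          apply Finset.sum_congr rfl
          intro i _
          rw [Finset.sum_ite_eq Finset.univ (e i) (fun k => g i * t k ^ m),
            if_pos (Finset.mem_univ _)]
  have hωmom : ∀ m, m ≤ d → ∑ k, ω k * t k ^ m = 0 := by
    intro m hm
    rw [hωmomgen m]
    rcases Nat.eq_zero_or_pos m with h | h
    · subst h; simpa using hgsum
    · exact hgmom m h hm
  have hωne : ∃ k, ω k ≠ 0 := ⟨e i₀, by rw [hωat i₀]; exact hgi₀⟩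
  obtain ⟨e', s', he'm, hs'pm, hsign', _, hclause⟩ := alt_exists ht d ω hωmom hωne
  have hsupp : (Finset.univ.filter fun k => ω k ≠ 0) ⊆ Finset.univ.image e := by
    intro k hk
    rw [Finset.mem_filter] at hk
    by_contra hcon
    exact hk.2 (hωoff k hcon)
  have himgcard : (Finset.univ.image e).card = d + 2 := by
    rw [Finset.card_image_of_injective _ hinj, Finset.card_univ, Fintype.card_fin]
  have hcsum := hclause (le_trans (Finset.card_le_card hsupp) (le_of_eq himgcard))
  have hee' : e' = e := by
    have h1 : e = ⇑((Finset.univ.image e).orderEmbOfFin himgcard) :=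
      Finset.orderEmbOfFin_unique himgcard
        (fun i => Finset.mem_image_of_mem e (Finset.mem_univ i)) he
    have h2 : e' = ⇑((Finset.univ.image e).orderEmbOfFin himgcard) :=
      Finset.orderEmbOfFin_unique himgcard
        (fun i => hsupp (Finset.mem_filter.2 ⟨Finset.mem_univ _, fun h => by
          have hcontra := hsign' i
          rw [h, mul_zero] at hcontra
          exact lt_irrefl 0 hcontra⟩)) he'm
    rw [h1, ← h2]
  rw [hee'] at hsign'
  set sc := s' * (-1:ℝ)^(d+1) with hscdef
  set ω' : Fin n → ℝ := fun k => sc * ω k with hω'def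
  have hsq : (-1:ℝ)^(d+1) * (-1:ℝ)^(d+1) = 1 := by
    rw [← pow_add]
    exact Even.neg_one_pow ⟨d+1, rfl⟩
  have hsignf : ∀ i : Fin (d+2), 0 < (-1:ℝ)^(d+1+i.1) * ω' (e i) := by
    intro i
    have h := hsign' i
    have heq : (-1:ℝ)^(d+1+i.1) * ω' (e i)
        = ((-1:ℝ)^(d+1) * (-1:ℝ)^(d+1)) * (s' * (-1:ℝ)^(i.1) * ω (e i)) := by
      rw [hω'def]
      dsimp only
      rw [hscdef, pow_add]
      ring
    rw [heq, hsq, one_mul]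
    exact h
  have hω'mom : ∀ m, m ≤ d → ∑ k, ω' k * t k ^ m = 0 := by
    intro m hm
    rw [hω'def]
    dsimp only
    calc ∑ k, sc * ω k * t k ^ m = sc * ∑ k, ω k * t k ^ m := by
          rw [Finset.mul_sum]
          exact Finset.sum_congr rfl (fun k _ => by ring)
      _ = 0 := by rw [hωmom m hm, mul_zero]
  have hω'c : 0 < ∑ k, ω' k * t k ^ (d+1) := by
    have heq : ∑ k, ω' k * t k ^ (d+1) = s' * (-1:ℝ)^(d+1) * ∑ k, ω k * t k ^ (d+1) := by
      rw [hω'def]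
      dsimp only
      rw [Finset.mul_sum]
      exact Finset.sum_congr rfl (fun k _ => by rw [hscdef]; ring)
    rw [heq]
    exact hcsum
  have hω'off : ∀ k, k ∉ Finset.univ.image e → ω' k = 0 := by
    intro k hk
    rw [hω'def]
    dsimp only
    rw [hωoff k hk, mul_zero]
  have hPpos : ∀ k ∈ P, 0 < ω' k := by
    intro k hk
    rw [hPdef, Finset.mem_image] at hk
    obtain ⟨i, hi, rfl⟩ := hk
    have hpar := (Finset.mem_filter.1 hi).2
    have h := hsignf i
    rw [neg_one_pow_even' hpar, one_mul] at h
    exact h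
  have hNneg : ∀ k ∈ N, ω' k < 0 := by
    intro k hk
    rw [hNdef, Finset.mem_image] at hk
    obtain ⟨i, hi, rfl⟩ := hk
    have hpar := (Finset.mem_filter.1 hi).2
    have h := hsignf i
    rw [neg_one_pow_odd' hpar] at h
    linarith
  have hPNdisj : N ∩ P = ∅ := by
    rw [Finset.eq_empty_iff_forall_notMem]
    intro k hk
    rw [Finset.mem_inter] at hk
    exact absurd (hPpos k hk.2) (not_lt.2 (le_of_lt (hNneg k hk.1)))
  have hunion : P ∪ N = Finset.univ.image e := by
    apply Finset.Subset.antisymm (Finset.union_subset hPsub hNsub)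
    intro k hk
    obtain ⟨i, hi, rfl⟩ := Finset.mem_image.1 hk
    have hpar2 : (d+1+i.1) % 2 = 0 ∨ (d+1+i.1) % 2 = 1 := by omega
    rcases hpar2 with h | h
    · exact Finset.mem_union_left _ (by
        rw [hPdef]
        exact Finset.mem_image_of_mem e (Finset.mem_filter.2 ⟨Finset.mem_univ _, h⟩))
    · exact Finset.mem_union_right _ (by
        rw [hNdef]
        exact Finset.mem_image_of_mem e (Finset.mem_filter.2 ⟨Finset.mem_univ _, h⟩))
  have hlastP : e (Fin.last (d+1)) ∈ P := by
    rw [hPdef]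
    apply Finset.mem_image_of_mem
    rw [Finset.mem_filter]
    refine ⟨Finset.mem_univ _, ?_⟩
    simp only [Fin.val_last]
    omega
  have hA : 0 < ∑ k ∈ P, ω' k :=
    Finset.sum_pos hPpos ⟨e (Fin.last (d+1)), hlastP⟩
  set A := ∑ k ∈ P, ω' k with hAdef
  have htot : A + ∑ k ∈ N, ω' k = 0 := by
    rw [hAdef, ← Finset.sum_union (Finset.disjoint_left.2 (fun k hkP hkN => by
      have : k ∈ N ∩ P := Finset.mem_inter.2 ⟨hkN, hkP⟩
      rw [hPNdisj] at this
      exact absurd this (Finset.notMem_empty k)))]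
    rw [hunion]
    rw [Finset.sum_subset (Finset.subset_univ _) (fun k _ hk => hω'off k hk)]
    have h := hω'mom 0 (Nat.zero_le d)
    simpa using h
  have hδmom : ∀ j : Fin d, ∑ k, ω' k * t k ^ (j.1+1) = 0 :=
    fun j => hω'mom (j.1+1) (by omega)
  have hcombzero : ∑ k, ω' k • momentCurve d (t k) = 0 := by
    funext j
    rw [combo_apply]
    exact hδmom j
  set wP : Fin n → ℝ := fun k => if k ∈ P then ω' k / A else 0 with hwPdef
  set wN : Fin n → ℝ := fun k => if k ∈ N then -ω' k / A else 0 with hwNdef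
  set p : Fin d → ℝ := ∑ k, wP k • momentCurve d (t k) with hpdef
  have hwPsum : ∑ k, wP k = 1 := by
    rw [hwPdef]
    dsimp only
    rw [Finset.sum_ite_mem, Finset.univ_inter, ← Finset.sum_div, ← hAdef,
      div_self (ne_of_gt hA)]
  have hwNsum : ∑ k, wN k = 1 := by
    rw [hwNdef]
    dsimp only
    rw [Finset.sum_ite_mem, Finset.univ_inter]
    have : ∑ k ∈ N, -ω' k / A = (-(∑ k ∈ N, ω' k)) / A := by
      rw [← Finset.sum_div, Finset.sum_neg_distrib]
    rw [this]
    have hNA : -(∑ k ∈ N, ω' k) = A := by linarith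
    rw [hNA, div_self (ne_of_gt hA)]
  have hcoefdiff : ∀ k, wP k - wN k = ω' k / A := by
    intro k
    rw [hwPdef, hwNdef]
    dsimp only
    by_cases hkP : k ∈ P
    · have hkN : k ∉ N := fun hkN => by
        have : k ∈ N ∩ P := Finset.mem_inter.2 ⟨hkN, hkP⟩
        rw [hPNdisj] at this
        exact absurd this (Finset.notMem_empty k)
      rw [if_pos hkP, if_neg hkN]
      ring
    · by_cases hkN : k ∈ N
      · rw [if_neg hkP, if_pos hkN]
        ring
      · rw [if_neg hkP, if_neg hkN]
        have hk0 : ω' k = 0 := by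
          by_contra hcon
          have hkimg : k ∈ Finset.univ.image e := by
            by_contra hcon2
            exact hcon (hω'off k hcon2)
          rw [← hunion] at hkimg
          rcases Finset.mem_union.1 hkimg with h | h
          · exact hkP h
          · exact hkN h
        rw [hk0]
        simp
  have hpN : ∑ k, wN k • momentCurve d (t k) = p := by
    have hsub : ∑ k, wP k • momentCurve d (t k) - ∑ k, wN k • momentCurve d (t k)
        = ∑ k, (ω' k / A) • momentCurve d (t k) := by
      rw [← Finset.sum_sub_distrib]
      apply Finset.sum_congr rfl
      intro k _
      rw [← sub_smul, hcoefdiff k]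
    have hzero : ∑ k, (ω' k / A) • momentCurve d (t k) = 0 := by
      have : ∑ k, (ω' k / A) • momentCurve d (t k)
          = (A⁻¹) • ∑ k, ω' k • momentCurve d (t k) := by
        rw [Finset.smul_sum]
        apply Finset.sum_congr rfl
        intro k _
        rw [smul_smul]
        congr 1
        field_simp
      rw [this, hcombzero, smul_zero]
    rw [hpdef]
    have := hsub.trans hzero
    linear_combination (norm := abel) -this
  have hpmemP : p ∈ mcConv d t P := by
    rw [hpdef]
    apply mem_mcConv.2
    refine ⟨wP, ?_, ?_, hwPsum, rfl⟩
    · intro k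
      rw [hwPdef]
      dsimp only
      split
      · exact div_nonneg (le_of_lt (hPpos k (by assumption))) (le_of_lt hA)
      · exact le_refl 0
    · intro k hk
      rw [hwPdef]
      dsimp only
      rw [if_neg hk]
  have hpmemN : p ∈ mcConv d t N := by
    apply mem_mcConv.2
    refine ⟨wN, ?_, ?_, hwNsum, hpN⟩
    · intro k
      rw [hwNdef]
      dsimp only
      split
      · exact div_nonneg (by linarith [hNneg k (by assumption)]) (le_of_lt hA)
      · exact le_refl 0
    · intro k hk
      rw [hwNdef]
      dsimp only
      rw [if_neg hk]
  have hpnot : p ∉ mcConv d t (N ∩ P) := by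
    rw [hPNdisj, mcConv]
    simp
  constructor
  · exact fun hsub => hpnot (hsub ⟨hpmemN, hpmemP⟩)
  · intro q hq q' hq' hproj
    obtain ⟨α, hα0, hαoff, hα1, hαc⟩ := mem_mcConv.1 hq
    obtain ⟨β, hβ0, hβoff, hβ1, hβc⟩ := mem_mcConv.1 hq'
    have hqlast : q (Fin.last d) = ∑ k, α k * t k ^ (d+1) := by
      rw [← hαc, combo_apply]
      simp [Fin.val_last]
    have hq'last : q' (Fin.last d) = ∑ k, β k * t k ^ (d+1) := by
      rw [← hβc, combo_apply]
      simp [Fin.val_last]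
    have hηmom : ∀ m, m ≤ d → ∑ k, (β k - α k) * t k ^ m = 0 := by
      intro m hm
      have hsplit : ∑ k, (β k - α k) * t k ^ m
          = ∑ k, β k * t k ^ m - ∑ k, α k * t k ^ m := by
        rw [← Finset.sum_sub_distrib]
        exact Finset.sum_congr rfl (fun k _ => by ring)
      rcases Nat.eq_zero_or_pos m with h | h
      · subst h
        simp only [pow_zero, mul_one] at hsplit ⊢
        rw [hsplit, hα1, hβ1, sub_self]
      · have hj : m - 1 < d := by omega
        have hc1 : q (Fin.castSucc ⟨m-1, hj⟩) = ∑ k, α k * t k ^ m := by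
          rw [← hαc, combo_apply]
          have : (Fin.castSucc (⟨m-1, hj⟩ : Fin d)).1 + 1 = m := by
            simp [Fin.coe_castSucc]
            omega
          rw [this]
        have hc2 : q' (Fin.castSucc ⟨m-1, hj⟩) = ∑ k, β k * t k ^ m := by
          rw [← hβc, combo_apply]
          have : (Fin.castSucc (⟨m-1, hj⟩ : Fin d)).1 + 1 = m := by
            simp [Fin.coe_castSucc]
            omega
          rw [this]
        have hpj := congrFun hproj ⟨m-1, hj⟩
        simp only [projLast] at hpj
        rw [hc1, hc2] at hpj
        rw [hsplit, ← hpj, sub_self]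
    set k₀ := e (Fin.last (d+1)) with hk₀def
    have hk₀P : k₀ ∈ P := hlastP
    have hk₀N : k₀ ∉ N := fun hkN => by
      have : k₀ ∈ N ∩ P := Finset.mem_inter.2 ⟨hkN, hk₀P⟩
      rw [hPNdisj] at this
      exact absurd this (Finset.notMem_empty k₀)
    have hω'k₀ : 0 < ω' k₀ := hPpos k₀ hk₀P
    set r0 := (β k₀ - α k₀) / ω' k₀ with hr0def
    have hδ : ∀ k, β k - α k - r0 * ω' k = 0 := by
      apply vanish_of_small_support ht d _ ((Finset.univ.image e).erase k₀)
      · rw [Finset.card_erase_of_mem (hPsub hk₀P), himgcard]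
        omega
      · intro k hk
        by_cases hkk : k = k₀
        · subst hkk
          rw [hr0def]
          field_simp
          ring
        · have hkimg : k ∉ Finset.univ.image e := by
            intro hcon
            exact hk (Finset.mem_erase.2 ⟨hkk, hcon⟩)
          have h1 : α k = 0 := hαoff k (fun hc => hkimg (hNsub hc))
          have h2 : β k = 0 := hβoff k (fun hc => hkimg (hPsub hc))
          have h3 : ω' k = 0 := hω'off k hkimg
          rw [h1, h2, h3]
          ring
      · intro m hm
        have h1 := hηmom m hm
        have h2 := hω'mom m hm
        calc ∑ k, (β k - α k - r0 * ω' k) * t k ^ m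
            = ∑ k, ((β k - α k) * t k ^ m - r0 * (ω' k * t k ^ m)) :=
              Finset.sum_congr rfl (fun k _ => by ring)
          _ = ∑ k, (β k - α k) * t k ^ m - r0 * ∑ k, ω' k * t k ^ m := by
              rw [Finset.sum_sub_distrib, Finset.mul_sum]
          _ = 0 := by rw [h1, h2, mul_zero, sub_zero]
    have hr0 : 0 ≤ r0 := by
      rw [hr0def]
      apply div_nonneg _ (le_of_lt hω'k₀)
      have hαk₀ : α k₀ = 0 := hαoff k₀ hk₀N
      rw [hαk₀, sub_zero]
      exact hβ0 k₀
    have hfinal : ∑ k, (β k - α k) * t k ^ (d+1) = r0 * ∑ k, ω' k * t k ^ (d+1) := by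
      rw [Finset.mul_sum]
      apply Finset.sum_congr rfl
      intro k _
      have hk := hδ k
      have hk' : β k - α k = r0 * ω' k := by linarith
      rw [hk']
      ring
    have hsplit : ∑ k, (β k - α k) * t k ^ (d+1)
        = ∑ k, β k * t k ^ (d+1) - ∑ k, α k * t k ^ (d+1) := by
      rw [← Finset.sum_sub_distrib]
      exact Finset.sum_congr rfl (fun k _ => by ring)
    rw [hqlast, hq'last]
    have hge : 0 ≤ r0 * ∑ k, ω' k * t k ^ (d+1) := mul_nonneg hr0 (le_of_lt hω'c)
    linarith [hfinal, hsplit.symm.trans hfinal]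

end mainlemmas

section finalpieces
variable {n : ℕ} {t : Fin n → ℝ}

lemma exists_bad_pair (ht : StrictMono t) (d : ℕ) (A B : Finset (Fin n))
    {q q' : Fin (d+1) → ℝ} (hq : q ∈ mcConv (d+1) t A) (hq' : q' ∈ mcConv (d+1) t B)
    (hproj : projLast d q = projLast d q') (hlt : q' (Fin.last d) < q (Fin.last d)) :
    ∃ P N : Finset (Fin n), P ⊆ A ∧ N ⊆ B ∧ P.card = (d+1)/2 + 1 ∧ N.card = d/2 + 1 ∧
      HeightLT d t N P := by
  classical
  obtain ⟨lam, hl0, hloff, hl1, hlc⟩ := mem_mcConv.1 hq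
  obtain ⟨mu, hm0, hmoff, hm1, hmc⟩ := mem_mcConv.1 hq'
  set ν : Fin n → ℝ := fun k => lam k - mu k with hνdef
  have hsplit : ∀ m : ℕ, ∑ k, ν k * t k ^ m = ∑ k, lam k * t k ^ m - ∑ k, mu k * t k ^ m := by
    intro m
    rw [← Finset.sum_sub_distrib]
    exact Finset.sum_congr rfl (fun k _ => by rw [hνdef]; ring)
  have hνmom : ∀ m, m ≤ d → ∑ k, ν k * t k ^ m = 0 := by
    intro m hm
    rw [hsplit m]
    rcases Nat.eq_zero_or_pos m with h | h
    · subst h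
      simp only [pow_zero, mul_one]
      rw [hl1, hm1, sub_self]
    · have hj : m - 1 < d := by omega
      have hc1 : q (Fin.castSucc ⟨m-1, hj⟩) = ∑ k, lam k * t k ^ m := by
        rw [← hlc, combo_apply]
        have he : (Fin.castSucc (⟨m-1, hj⟩ : Fin d)).1 + 1 = m := by
          simp [Fin.coe_castSucc]; omega
        rw [he]
      have hc2 : q' (Fin.castSucc ⟨m-1, hj⟩) = ∑ k, mu k * t k ^ m := by
        rw [← hmc, combo_apply]
        have he : (Fin.castSucc (⟨m-1, hj⟩ : Fin d)).1 + 1 = m := by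
          simp [Fin.coe_castSucc]; omega
        rw [he]
      have hpj := congrFun hproj ⟨m-1, hj⟩
      simp only [projLast] at hpj
      rw [hc1, hc2] at hpj
      rw [← hpj, sub_self]
  have hνc : 0 < ∑ k, ν k * t k ^ (d+1) := by
    rw [hsplit (d+1)]
    have h1 : q (Fin.last d) = ∑ k, lam k * t k ^ (d+1) := by
      rw [← hlc, combo_apply]; simp [Fin.val_last]
    have h2 : q' (Fin.last d) = ∑ k, mu k * t k ^ (d+1) := by
      rw [← hmc, combo_apply]; simp [Fin.val_last]
    rw [← h1, ← h2]
    linarith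
  have hνne : ∃ k, ν k ≠ 0 := by
    by_contra hcon
    push_neg at hcon
    have : ∑ k, ν k * t k ^ (d+1) = 0 :=
      Finset.sum_eq_zero (fun k _ => by rw [hcon k, zero_mul])
    rw [this] at hνc
    exact lt_irrefl 0 hνc
  obtain ⟨e, s, hem, hspm, hsgn, hs1, _⟩ := alt_exists ht d ν hνmom hνne
  have hs := hs1 hνc
  have hsgnf : ∀ i : Fin (d+2), 0 < (-1:ℝ)^(d+1+i.1) * ν (e i) := by
    intro i
    have h := hsgn i
    rw [hs] at h
    have heq : (-1:ℝ)^(d+1) * (-1:ℝ)^(i.1) * ν (e i) = (-1:ℝ)^(d+1+i.1) * ν (e i) := by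
      rw [pow_add ((-1:ℝ)) (d+1) i.1]
    rw [heq] at h
    exact h
  refine ⟨(Finset.univ.filter fun i : Fin (d+2) => (d+1+i.1) % 2 = 0).image e,
      (Finset.univ.filter fun i : Fin (d+2) => (d+1+i.1) % 2 = 1).image e,
      ?_, ?_, ?_, ?_, heightLT_of_alt ht d e hem⟩
  · intro k hk
    obtain ⟨i, hi, rfl⟩ := Finset.mem_image.1 hk
    have hpar := (Finset.mem_filter.1 hi).2
    have h := hsgnf i
    rw [neg_one_pow_even' hpar, one_mul] at h
    have hlam : 0 < lam (e i) := by
      have := hm0 (e i)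
      rw [hνdef] at h
      dsimp only at h
      linarith
    by_contra hcon
    rw [hloff (e i) hcon] at hlam
    exact lt_irrefl 0 hlam
  · intro k hk
    obtain ⟨i, hi, rfl⟩ := Finset.mem_image.1 hk
    have hpar := (Finset.mem_filter.1 hi).2
    have h := hsgnf i
    rw [neg_one_pow_odd' hpar] at h
    have hmu : 0 < mu (e i) := by
      have := hl0 (e i)
      rw [hνdef] at h
      dsimp only at h
      linarith
    by_contra hcon
    rw [hmoff (e i) hcon] at hmu
    exact lt_irrefl 0 hmu
  · rw [Finset.card_image_of_injective _ hem.injective]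
    exact (parity_filter_cards d).1
  · rw [Finset.card_image_of_injective _ hem.injective]
    exact (parity_filter_cards d).2

lemma no_bad_pair (ht : StrictMono t) (d : ℕ) (X Y X' Y' : Finset (Fin n))
    (hX' : X' ⊆ X) (hY' : Y' ⊆ Y) (hcard : X'.card + Y'.card ≤ d + 2)
    (hlt : HeightLT d t X' Y') (hle : HeightLE d t Y X) : False := by
  classical
  obtain ⟨hover, hhle⟩ := hlt
  obtain ⟨p, hpmem, hpnot⟩ := Set.not_subset.1 hover
  obtain ⟨hpX', hpY'⟩ := hpmem
  obtain ⟨α, hα0, hαoff, hα1, hαc⟩ := mem_mcConv.1 hpX'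
  obtain ⟨β, hβ0, hβoff, hβ1, hβc⟩ := mem_mcConv.1 hpY'
  set q : Fin (d+1) → ℝ := ∑ k, α k • momentCurve (d+1) (t k) with hqdef
  set q' : Fin (d+1) → ℝ := ∑ k, β k • momentCurve (d+1) (t k) with hq'def
  have hqmem : q ∈ mcConv (d+1) t X' := mem_mcConv.2 ⟨α, hα0, hαoff, hα1, rfl⟩
  have hq'mem : q' ∈ mcConv (d+1) t Y' := mem_mcConv.2 ⟨β, hβ0, hβoff, hβ1, rfl⟩
  have hmomeq : ∀ m, 1 ≤ m → m ≤ d → ∑ k, α k * t k ^ m = ∑ k, β k * t k ^ m := by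
    intro m h1 h2
    have hj : m - 1 < d := by omega
    have hc1 : p ⟨m-1, hj⟩ = ∑ k, α k * t k ^ m := by
      rw [← hαc, combo_apply]
      have he : (⟨m-1, hj⟩ : Fin d).1 + 1 = m := by simp; omega
      rw [he]
    have hc2 : p ⟨m-1, hj⟩ = ∑ k, β k * t k ^ m := by
      rw [← hβc, combo_apply]
      have he : (⟨m-1, hj⟩ : Fin d).1 + 1 = m := by simp; omega
      rw [he]
    rw [← hc1, ← hc2]
  have hproj : projLast d q = projLast d q' := by
    funext j
    simp only [projLast, hqdef, hq'def]
    rw [combo_apply, combo_apply]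
    have he : (Fin.castSucc j).1 + 1 = j.1 + 1 := by simp [Fin.coe_castSucc]
    rw [he]
    exact hmomeq (j.1+1) (by omega) (by omega)
  have h1 : q (Fin.last d) ≤ q' (Fin.last d) := hhle q hqmem q' hq'mem hproj
  have h2 : q' (Fin.last d) ≤ q (Fin.last d) :=
    hle q' (mcConv_mono hY' hq'mem) q (mcConv_mono hX' hqmem) hproj.symm
  have hqlast : q (Fin.last d) = ∑ k, α k * t k ^ (d+1) := by
    rw [hqdef, combo_apply]; simp [Fin.val_last]
  have hq'last : q' (Fin.last d) = ∑ k, β k * t k ^ (d+1) := by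
    rw [hq'def, combo_apply]; simp [Fin.val_last]
  have hηmom : ∀ m, m ≤ d + 1 → ∑ k, (β k - α k) * t k ^ m = 0 := by
    intro m hm
    have hsplit : ∑ k, (β k - α k) * t k ^ m
        = ∑ k, β k * t k ^ m - ∑ k, α k * t k ^ m := by
      rw [← Finset.sum_sub_distrib]
      exact Finset.sum_congr rfl (fun k _ => by ring)
    rw [hsplit]
    rcases Nat.eq_zero_or_pos m with h | h
    · subst h
      simp only [pow_zero, mul_one]
      rw [hα1, hβ1, sub_self]
    · rcases Nat.lt_or_ge m (d+1) with h' | h'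
      · rw [hmomeq m h (by omega), sub_self]
      · have hmd : m = d + 1 := by omega
        subst hmd
        have := le_antisymm h1 h2
        rw [hqlast, hq'last] at this
        rw [this, sub_self]
  have hvan := vanish_of_small_support ht (d+1) (fun k => β k - α k) (X' ∪ Y')
    (le_trans (Finset.card_union_le X' Y') hcard)
    (fun k hk => by
      show β k - α k = 0
      rw [hαoff k (fun hc => hk (Finset.mem_union_left _ hc)),
        hβoff k (fun hc => hk (Finset.mem_union_right _ hc)), sub_self])
    hηmom
  have hwsupp : ∀ k, k ∉ X' ∩ Y' → α k = 0 := by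
    intro k hk
    by_cases hkX : k ∈ X'
    · have hkY : k ∉ Y' := fun hc => hk (Finset.mem_inter.2 ⟨hkX, hc⟩)
      have hv : β k - α k = 0 := hvan k
      have hβk : β k = 0 := hβoff k hkY
      linarith
    · exact hαoff k hkX
  exact hpnot (mem_mcConv.2 ⟨α, hα0, hwsupp, hα1, hαc⟩)

end finalpieces

/-- **Lemma.** For a triangulation `T` of `C(n,d)` with vertex set `[n]` and a simplex
`σ ⊆ [n]` on `γ_d`:
(1) `σ ≤_{d+1} T` iff there are no `σ' ⊆ σ` with `|σ'| = ⌈d/2⌉ + 1` and no face `τ` of `T`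
with `|τ| = ⌊d/2⌋ + 1` such that `τ <_{d+1} σ'`; and
(2) `T ≤_{d+1} σ` iff there are no `σ' ⊆ σ` with `|σ'| = ⌊d/2⌋ + 1` and no face `τ` of `T`
with `|τ| = ⌈d/2⌉ + 1` such that `σ' <_{d+1} τ`. -/
theorem simplexLE_triangulation_iff_no_interlacing_faces
    (d n : ℕ) (t : Fin n → ℝ) (ht : StrictMono t)
    (T : Finset (Finset (Fin n)))
    (hT : IsTriangulation d t Finset.univ T) (hTV : UsesAllVertices Finset.univ T)
    (σ : Finset (Fin n)) (hσ : σ.card ≤ d + 1) :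
    (SimplexLE d t σ T ↔
      ¬ ∃ σ' τ : Finset (Fin n), σ' ⊆ σ ∧ σ'.card = (d + 1) / 2 + 1 ∧
          IsFaceOf τ T ∧ τ.card = d / 2 + 1 ∧ HeightLT d t τ σ') ∧
    (TriLE d t T σ ↔
      ¬ ∃ σ' τ : Finset (Fin n), σ' ⊆ σ ∧ σ'.card = d / 2 + 1 ∧
          IsFaceOf τ T ∧ τ.card = (d + 1) / 2 + 1 ∧ HeightLT d t σ' τ) := by

  constructor
  · constructor
    · rintro hSLE ⟨σ', τ, hσ'σ, hσ'card, ⟨ρ, hρT, hτρ⟩, hτcard, hov, hhle⟩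
      exact no_bad_pair ht d ρ σ τ σ' hτρ hσ'σ (by omega) ⟨hov, hhle⟩ (hSLE ρ hρT)
    · intro hno τ hτT
      by_contra hcon
      rw [HeightLE] at hcon
      push_neg at hcon
      obtain ⟨q, hq, q', hq', hproj, hlt⟩ := hcon
      obtain ⟨P, N, hPA, hNB, hPcard, hNcard, hHLT⟩ :=
        exists_bad_pair ht d σ τ hq hq' hproj hlt
      exact hno ⟨P, N, hPA, hPcard, ⟨τ, hτT, hNB⟩, hNcard, hHLT⟩
  · constructor
    · rintro hTLE ⟨σ', τ, hσ'σ, hσ'card, ⟨ρ, hρT, hτρ⟩, hτcard, hov, hhle⟩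
      exact no_bad_pair ht d σ ρ σ' τ hσ'σ hτρ (by omega) ⟨hov, hhle⟩ (hTLE ρ hρT)
    · intro hno τ hτT
      by_contra hcon
      rw [HeightLE] at hcon
      push_neg at hcon
      obtain ⟨q, hq, q', hq', hproj, hlt⟩ := hcon
      obtain ⟨P, N, hPτ, hNσ, hPcard, hNcard, hHLT⟩ :=
        exists_bad_pair ht d τ σ hq hq' hproj hlt
      exact hno ⟨N, P, hNσ, hNcard, ⟨τ, hτT, hPτ⟩, hPcard, hHLT⟩
end

section
/- Fix t₁ < ⋯ < t_n and identify i ∈ [n] with γ₂(t_i). Let E₁, E₂, E₃ be three disjoint (possibly empty) sets of 2-element subsets of [n] (edges on γ₂), and suppose the edges of E₁ ∪ E₂ ∪ E₃ can be linearly ordered e₁, …, e_m so that: (a) every edge of E_i precedes every edge of E_j whenever i < j; (b) for i < j, either e_i <₃ e_j or e_i and e_j do not cross; and (c) the edges of E₂ are pairwise non-crossing. Then there exists a triangulation T of C(n,2) with vertex set [n] such that e ≤₃ T for every e ∈ E₁, T ≤₃ e for every e ∈ E₃, and every e ∈ E₂ is a face of T. -/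
open Finset

namespace Sep

variable {n : ℕ} {t : Fin n → ℝ}

lemma mc_inj (ht : StrictMono t) {d : ℕ} (hd : 0 < d) :
    Function.Injective (fun i => momentCurve d (t i)) := by
  intro a b hab
  have := congrFun hab ⟨0, hd⟩
  simp only [momentCurve] at this
  rw [pow_one, pow_one] at this
  exact ht.injective this

/-- Weight characterization of membership in `mcConv`. -/
lemma mem_mcConv (ht : StrictMono t) {d : ℕ} (hd : 0 < d) (σ : Finset (Fin n))
    (p : Fin d → ℝ) :
    p ∈ mcConv d t σ ↔ ∃ w : Fin n → ℝ, (∀ l ∈ σ, 0 ≤ w l) ∧ (∑ l ∈ σ, w l) = 1 ∧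
      ∀ i : Fin d, p i = ∑ l ∈ σ, w l * (t l) ^ (i.1 + 1) := by
  classical
  unfold mcConv
  have himg : ((fun i => momentCurve d (t i)) '' ↑σ) = ↑(σ.image (fun i => momentCurve d (t i))) := by
    simp [Finset.coe_image]
  rw [himg]
  constructor
  · intro hp
    rw [Finset.mem_convexHull] at hp
    obtain ⟨w, hw0, hw1, hwc⟩ := hp
    refine ⟨fun l => w (momentCurve d (t l)), fun l hl => hw0 _ (Finset.mem_image_of_mem _ hl), ?_, ?_⟩
    · rw [← hw1]
      exact (Finset.sum_image (fun x _ y _ h => mc_inj ht hd h)).symm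
    · intro i
      have hcm : (σ.image (fun i => momentCurve d (t i))).centerMass w id
          = ∑ l ∈ σ, w (momentCurve d (t l)) • momentCurve d (t l) := by
        rw [Finset.centerMass_eq_of_sum_1 _ id hw1]
        exact Finset.sum_image (fun x _ y _ h => mc_inj ht hd h)
      rw [← hwc, hcm]
      rw [Finset.sum_apply]
      exact Finset.sum_congr rfl (fun l hl => by simp [momentCurve])
  · rintro ⟨w, hw0, hw1, hwc⟩
    have hp : p = σ.centerMass w (fun l => momentCurve d (t l)) := by
      rw [Finset.centerMass_eq_of_sum_1 _ _ hw1]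
      funext i
      rw [Finset.sum_apply, hwc i]
      exact Finset.sum_congr rfl (fun l hl => by simp [momentCurve])
    rw [hp]
    exact Finset.centerMass_mem_convexHull _ hw0 (by rw [hw1]; norm_num)
      (fun l hl => Finset.mem_coe.2 (Finset.mem_image_of_mem _ hl))


/-- Evaluate the quadratic edge functional on an affine combination. -/
lemma comb_eval₂ (σ : Finset (Fin n)) (w : Fin n → ℝ) (q : Fin 2 → ℝ)
    (hw1 : ∑ l ∈ σ, w l = 1)
    (hq : ∀ i : Fin 2, q i = ∑ l ∈ σ, w l * t l ^ (i.1 + 1)) (A B : ℝ) :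
    q 1 - (A + B) * q 0 + A * B = ∑ l ∈ σ, w l * ((t l - A) * (t l - B)) := by
  have h0 : (∑ l ∈ σ, w l * t l) = q 0 := by
    rw [hq 0]; exact Finset.sum_congr rfl fun l _ => by norm_num
  have h1 : (∑ l ∈ σ, w l * t l ^ 2) = q 1 := by
    rw [hq 1]; exact Finset.sum_congr rfl fun l _ => by norm_num
  have key : ∑ l ∈ σ, w l * ((t l - A) * (t l - B))
      = (∑ l ∈ σ, w l * t l ^ 2) - (A + B) * (∑ l ∈ σ, w l * t l)
        + A * B * (∑ l ∈ σ, w l) := by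
    rw [Finset.mul_sum, Finset.mul_sum, ← Finset.sum_sub_distrib, ← Finset.sum_add_distrib]
    exact Finset.sum_congr rfl fun l _ => by ring
  rw [key, hw1, h0, h1]; ring

/-- Evaluate the cubic plane functional on an affine combination. -/
lemma comb_eval₃ (σ : Finset (Fin n)) (w : Fin n → ℝ) (q : Fin 3 → ℝ)
    (hw1 : ∑ l ∈ σ, w l = 1)
    (hq : ∀ i : Fin 3, q i = ∑ l ∈ σ, w l * t l ^ (i.1 + 1)) (A B C : ℝ) :
    q 2 - (A + B + C) * q 1 + (A * B + A * C + B * C) * q 0 - A * B * C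
      = ∑ l ∈ σ, w l * ((t l - A) * (t l - B) * (t l - C)) := by
  have h0 : (∑ l ∈ σ, w l * t l) = q 0 := by
    rw [hq 0]; exact Finset.sum_congr rfl fun l _ => by norm_num
  have h1 : (∑ l ∈ σ, w l * t l ^ 2) = q 1 := by
    rw [hq 1]; exact Finset.sum_congr rfl fun l _ => by norm_num
  have h2 : (∑ l ∈ σ, w l * t l ^ 3) = q 2 := by
    rw [hq 2]; exact Finset.sum_congr rfl fun l _ => by norm_num
  have key : ∑ l ∈ σ, w l * ((t l - A) * (t l - B) * (t l - C))
      = (∑ l ∈ σ, w l * t l ^ 3) - (A + B + C) * (∑ l ∈ σ, w l * t l ^ 2)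
        + (A * B + A * C + B * C) * (∑ l ∈ σ, w l * t l)
        - A * B * C * (∑ l ∈ σ, w l) := by
    rw [Finset.mul_sum, Finset.mul_sum, Finset.mul_sum, ← Finset.sum_sub_distrib,
      ← Finset.sum_add_distrib, ← Finset.sum_sub_distrib]
    exact Finset.sum_congr rfl fun l _ => by ring
  rw [key, hw1, h0, h1, h2]; ring

/-- Membership in a triangle from the three edge-functional sign conditions. -/
lemma mem_triangle (ht : StrictMono t) {a b c : Fin n} (hab : a < b) (hbc : b < c)
    (p : Fin 2 → ℝ)
    (h1 : 0 ≤ p 1 - (t a + t b) * p 0 + t a * t b)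
    (h2 : 0 ≤ p 1 - (t b + t c) * p 0 + t b * t c)
    (h3 : p 1 - (t a + t c) * p 0 + t a * t c ≤ 0) :
    p ∈ mcConv 2 t {a, b, c} := by
  classical
  have tab : t a < t b := ht hab
  have tbc : t b < t c := ht hbc
  have tac : t a < t c := tab.trans tbc
  set wa : ℝ := (p 1 - (t b + t c) * p 0 + t b * t c) / ((t a - t b) * (t a - t c)) with hwa
  set wb : ℝ := (p 1 - (t a + t c) * p 0 + t a * t c) / ((t b - t a) * (t b - t c)) with hwb
  set wc : ℝ := (p 1 - (t a + t b) * p 0 + t a * t b) / ((t c - t a) * (t c - t b)) with hwc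
  have dab : t a - t b < 0 := by linarith
  have dac : t a - t c < 0 := by linarith
  have dba : (0:ℝ) < t b - t a := by linarith
  have dbc : t b - t c < 0 := by linarith
  have dca : (0:ℝ) < t c - t a := by linarith
  have dcb : (0:ℝ) < t c - t b := by linarith
  have hwa0 : 0 ≤ wa := div_nonneg h2 (by nlinarith)
  have hwb0 : 0 ≤ wb := by
    rw [hwb, ← neg_div_neg_eq]; exact div_nonneg (by linarith) (by nlinarith)
  have hwc0 : 0 ≤ wc := div_nonneg h1 (by nlinarith)
  have hne1 : ((t a - t b) * (t a - t c)) ≠ 0 := by nlinarith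
  have hne2 : ((t b - t a) * (t b - t c)) ≠ 0 := by nlinarith
  have hne3 : ((t c - t a) * (t c - t b)) ≠ 0 := by nlinarith
  have : t a - t b ≠ 0 := by linarith
  have : t a - t c ≠ 0 := by linarith
  have : t b - t c ≠ 0 := by linarith
  have : t b - t a ≠ 0 := by linarith
  have : t c - t a ≠ 0 := by linarith
  have : t c - t b ≠ 0 := by linarith
  have hba : b ≠ a := hab.ne'
  have hca : c ≠ a := (hab.trans hbc).ne'
  have hcb : c ≠ b := hbc.ne'
  have hanb : a ∉ ({b, c} : Finset (Fin n)) := by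
    simp [hba.symm, hca.symm, Finset.mem_insert]
  have hbnc : b ∉ ({c} : Finset (Fin n)) := by simp [hcb.symm]
  rw [mem_mcConv ht (by norm_num)]
  refine ⟨fun l => if l = a then wa else if l = b then wb else if l = c then wc else 0,
    ?_, ?_, ?_⟩
  · intro l _
    by_cases h : l = a
    · simp [h, hwa0]
    · by_cases h' : l = b
      · simp [h, h', if_neg hba, hwb0]
      · by_cases h'' : l = c
        · simp [h, h', h'', if_neg hca, if_neg hcb, hwc0]
        · simp [h, h', h'']
  · rw [show ({a, b, c} : Finset (Fin n)) = insert a (insert b {c}) from rfl,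
      Finset.sum_insert hanb, Finset.sum_insert hbnc, Finset.sum_singleton]
    simp only [if_pos rfl, if_neg hba, if_neg hca, if_neg hcb, eq_self_iff_true, if_true]
    rw [hwa, hwb, hwc]
    field_simp
    ring
  · intro i
    rw [show ({a, b, c} : Finset (Fin n)) = insert a (insert b {c}) from rfl,
      Finset.sum_insert hanb, Finset.sum_insert hbnc, Finset.sum_singleton]
    simp only [if_pos rfl, if_neg hba, if_neg hca, if_neg hcb, eq_self_iff_true, if_true]
    fin_cases i
    · show p 0 = wa * t a ^ (0 + 1) + (wb * t b ^ (0 + 1) + wc * t c ^ (0 + 1))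
      rw [hwa, hwb, hwc]
      field_simp
      ring
    · show p 1 = wa * t a ^ (1 + 1) + (wb * t b ^ (1 + 1) + wc * t c ^ (1 + 1))
      rw [hwa, hwb, hwc]
      field_simp
      ring


/-- Membership of a two-point combination in `mcConv`. -/
lemma mem_pair (ht : StrictMono t) {d : ℕ} (hd : 0 < d) {x y : Fin n} (hxy : x ≠ y)
    {u : ℝ} (hu0 : 0 ≤ u) (hu1 : u ≤ 1) (q : Fin d → ℝ)
    (hq : ∀ i : Fin d, q i = (1 - u) * t x ^ (i.1 + 1) + u * t y ^ (i.1 + 1)) :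
    q ∈ mcConv d t {x, y} := by
  classical
  rw [mem_mcConv ht hd]
  refine ⟨fun l => if l = x then 1 - u else if l = y then u else 0, ?_, ?_, ?_⟩
  · intro l _
    by_cases h : l = x
    · simp [h]; linarith
    · by_cases h' : l = y
      · subst h'
        simp only [if_neg h, if_pos rfl]
        exact hu0
      · simp [h, h']
  · rw [Finset.sum_pair hxy]
    simp [if_neg (Ne.symm hxy)]
  · intro i
    rw [Finset.sum_pair hxy, hq i]
    simp [if_neg (Ne.symm hxy)]

/-- The real-number core of the crossing-point construction. -/
lemma cross_core {α β γ δ : ℝ} (h1 : α < β) (h2 : β < γ) (h3 : γ < δ) :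
    ∃ u v : ℝ, 0 ≤ u ∧ u ≤ 1 ∧ 0 ≤ v ∧ v ≤ 1 ∧
      ((1 - u) * α + u * γ = (1 - v) * β + v * δ) ∧
      ((1 - u) * α ^ 2 + u * γ ^ 2 = (1 - v) * β ^ 2 + v * δ ^ 2) ∧
      ((1 - u) * α ^ 3 + u * γ ^ 3 < (1 - v) * β ^ 3 + v * δ ^ 3) := by
  have hS : (0:ℝ) < β + δ - α - γ := by linarith
  set x0 : ℝ := (β * δ - α * γ) / (β + δ - α - γ) with hx0
  have hx0S : x0 * (β + δ - α - γ) = β * δ - α * γ := by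
    rw [hx0]; field_simp
  have hax : α < x0 := by
    rw [hx0, lt_div_iff₀ hS]; nlinarith
  have hxc : x0 < γ := by
    rw [hx0, div_lt_iff₀ hS]; nlinarith
  have hbx : β < x0 := by
    rw [hx0, lt_div_iff₀ hS]; nlinarith
  have hxd : x0 < δ := by
    rw [hx0, div_lt_iff₀ hS]; nlinarith
  have hca : (0:ℝ) < γ - α := by linarith
  have hdb : (0:ℝ) < δ - β := by linarith
  refine ⟨(x0 - α) / (γ - α), (x0 - β) / (δ - β), ?_, ?_, ?_, ?_, ?_, ?_, ?_⟩
  · exact div_nonneg (by linarith) hca.le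
  · rw [div_le_one hca]; linarith
  · exact div_nonneg (by linarith) hdb.le
  · rw [div_le_one hdb]; linarith
  · field_simp; ring
  · have e1 : (1 - (x0 - α) / (γ - α)) * α ^ 2 + (x0 - α) / (γ - α) * γ ^ 2
        = (α + γ) * x0 - α * γ := by field_simp; ring
    have e2 : (1 - (x0 - β) / (δ - β)) * β ^ 2 + (x0 - β) / (δ - β) * δ ^ 2
        = (β + δ) * x0 - β * δ := by field_simp; ring
    rw [e1, e2]; linear_combination -hx0S
  · have e1 : (1 - (x0 - α) / (γ - α)) * α ^ 3 + (x0 - α) / (γ - α) * γ ^ 3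
        = α ^ 3 + (x0 - α) * (α ^ 2 + α * γ + γ ^ 2) := by field_simp; ring
    have e2 : (1 - (x0 - β) / (δ - β)) * β ^ 3 + (x0 - β) / (δ - β) * δ ^ 3
        = β ^ 3 + (x0 - β) * (β ^ 2 + β * δ + δ ^ 2) := by field_simp; ring
    rw [e1, e2]
    have hprod : (0:ℝ) < (β - α) * (γ - β) * (δ - γ) * (δ - α) := by
      have := mul_pos (mul_pos (mul_pos (show (0:ℝ) < β - α by linarith)
        (show (0:ℝ) < γ - β by linarith)) (show (0:ℝ) < δ - γ by linarith))
        (show (0:ℝ) < δ - α by linarith)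
      linarith
    have key : ((β ^ 3 + (x0 - β) * (β ^ 2 + β * δ + δ ^ 2))
        - (α ^ 3 + (x0 - α) * (α ^ 2 + α * γ + γ ^ 2))) * (β + δ - α - γ)
        = (β - α) * (γ - β) * (δ - γ) * (δ - α) := by
      linear_combination ((β ^ 2 + β * δ + δ ^ 2) - (α ^ 2 + α * γ + γ ^ 2)) * hx0S
    nlinarith [key, hprod, hS]

lemma mcConv_empty {d : ℕ} : mcConv d t (∅ : Finset (Fin n)) = ∅ := by
  simp [mcConv]

lemma pair_disj {a b c d : Fin n} (h1 : a < b) (h2 : b < c) (h3 : c < d) :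
    ({a, c} : Finset (Fin n)) ∩ {b, d} = ∅ := by
  have hab := h1.ne
  have had := (h1.trans (h2.trans h3)).ne
  have hcb := h2.ne'
  have hcd := h3.ne
  ext z
  simp only [Finset.mem_inter, Finset.mem_insert, Finset.mem_singleton, Finset.notMem_empty,
    iff_false, not_and]
  rintro (rfl | rfl) (rfl | rfl) <;> simp_all

/-- Crossing chords: overlap in the plane, and the left chord is strictly lower. -/
lemma cross_geom (ht : StrictMono t) {a b c d : Fin n} (h1 : a < b) (h2 : b < c) (h3 : c < d) :
    Overlap 2 t {a, c} {b, d} ∧ Overlap 2 t {b, d} {a, c} ∧ ¬ HeightLE 2 t {b, d} {a, c} := by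
  obtain ⟨u, v, hu0, hu1, hv0, hv1, eq1, eq2, ineq⟩ := cross_core (ht h1) (ht h2) (ht h3)
  have hac : a ≠ c := (h1.trans h2).ne
  have hbd : b ≠ d := (h2.trans h3).ne
  set p2 : Fin 2 → ℝ := fun i => (1 - u) * t a ^ (i.1 + 1) + u * t c ^ (i.1 + 1) with hp2
  have hmem1 : p2 ∈ mcConv 2 t {a, c} :=
    mem_pair ht (by norm_num) hac hu0 hu1 p2 (fun i => rfl)
  have hmem2 : p2 ∈ mcConv 2 t {b, d} := by
    refine mem_pair ht (by norm_num) hbd hv0 hv1 p2 (fun i => ?_)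
    rw [hp2]
    fin_cases i
    · simpa using eq1
    · simpa using eq2
  have hov1 : Overlap 2 t {a, c} {b, d} := by
    intro hsub
    have := hsub ⟨hmem1, hmem2⟩
    rw [pair_disj h1 h2 h3, mcConv_empty] at this
    exact this
  have hov2 : Overlap 2 t {b, d} {a, c} := by
    intro hsub
    have h' : ({b, d} : Finset (Fin n)) ∩ {a, c} = ∅ := by
      rw [Finset.inter_comm]; exact pair_disj h1 h2 h3
    have := hsub ⟨hmem2, hmem1⟩
    rw [h', mcConv_empty] at this
    exact this
  refine ⟨hov1, hov2, ?_⟩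
  intro H
  set q : Fin 3 → ℝ := fun i => (1 - v) * t b ^ (i.1 + 1) + v * t d ^ (i.1 + 1) with hq
  set q' : Fin 3 → ℝ := fun i => (1 - u) * t a ^ (i.1 + 1) + u * t c ^ (i.1 + 1) with hq'
  have hqm : q ∈ mcConv 3 t {b, d} := mem_pair ht (by norm_num) hbd hv0 hv1 q (fun i => rfl)
  have hq'm : q' ∈ mcConv 3 t {a, c} := mem_pair ht (by norm_num) hac hu0 hu1 q' (fun i => rfl)
  have hproj : projLast 2 q = projLast 2 q' := by
    funext i
    simp only [projLast, hq, hq', Fin.coe_castSucc]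
    fin_cases i
    · simpa using eq1.symm
    · simpa using eq2.symm
  have := H q hqm q' hq'm hproj
  have hlast : q (Fin.last 2) = (1 - v) * t b ^ 3 + v * t d ^ 3 := by
    rw [hq]; norm_num [Fin.last]
  have hlast' : q' (Fin.last 2) = (1 - u) * t a ^ 3 + u * t c ^ 3 := by
    rw [hq']; norm_num [Fin.last]
  rw [hlast, hlast'] at this
  linarith


/-- Core pointwise height comparison: if no edge of the triangle `{a,b,c}` "left-crosses"
the edge `{x,y}`, then on the triangle the chord over `{x,y}` lies (weakly) below the
plane of the triangle. All in terms of real parameters on the moment curve. -/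
lemma neg3 {p q r : ℝ} (hp : p ≤ 0) (hq : q ≤ 0) (hr : r ≤ 0) : p*q*r ≤ 0 :=
  mul_nonpos_of_nonneg_of_nonpos (mul_nonneg_of_nonpos_of_nonpos hp hq) hr

lemma ppn {p q r : ℝ} (hp : 0 ≤ p) (hq : 0 ≤ q) (hr : r ≤ 0) : p*q*r ≤ 0 :=
  mul_nonpos_of_nonneg_of_nonpos (mul_nonneg hp hq) hr

set_option maxHeartbeats 1000000 in
lemma core_ineq {a b c x y u : ℝ}
    (hab : a < b) (hbc : b < c) (hxy : x < y)
    (C1 : ¬(a < x ∧ x < b ∧ b < y))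
    (C3 : ¬(a < x ∧ x < c ∧ c < y))
    (hu0 : 0 ≤ u) (hu1 : u ≤ 1)
    (Hab : 0 ≤ (1-u)*((x-a)*(x-b)) + u*((y-a)*(y-b)))
    (Hac : (1-u)*((x-a)*(x-c)) + u*((y-a)*(y-c)) ≤ 0) :
    (1-u)*((x-a)*(x-b)*(x-c)) + u*((y-a)*(y-b)*(y-c)) ≤ 0 := by
  have h1u : 0 ≤ 1 - u := by linarith
  rcases le_or_gt y a with hya | hay
  · -- y ≤ a
    have hx : (x-a)*(x-b)*(x-c) ≤ 0 := neg3 (by linarith) (by linarith) (by linarith)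
    have hy : (y-a)*(y-b)*(y-c) ≤ 0 := neg3 (by linarith) (by linarith) (by linarith)
    nlinarith [mul_nonpos_of_nonneg_of_nonpos h1u hx, mul_nonpos_of_nonneg_of_nonpos hu0 hy]
  rcases le_or_gt y b with hyb | hby
  · -- a < y ≤ b
    rcases le_or_gt x a with hxa | hax
    · -- x ≤ a : chain via (y-c) * Hab
      have h₁ : 0 ≤ (1-u)*((x-a)*(x-b))*(y-x) := by
        have : 0 ≤ (x-a)*(x-b) := by nlinarith
        have := mul_nonneg (mul_nonneg h1u this) (by linarith : (0:ℝ) ≤ y - x)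
        linarith
      have h₂ : (y-c)*((1-u)*((x-a)*(x-b)) + u*((y-a)*(y-b))) ≤ 0 :=
        mul_nonpos_of_nonpos_of_nonneg (by linarith) Hab
      nlinarith [h₁, h₂]
    · -- a < x < y ≤ b : forces u = 1, y = b
      have e1 : (1-u)*((x-a)*(x-b)) ≤ 0 := by
        apply mul_nonpos_of_nonneg_of_nonpos h1u
        nlinarith
      have e2 : u*((y-a)*(y-b)) ≤ 0 := by
        apply mul_nonpos_of_nonneg_of_nonpos hu0
        nlinarith
      have z1 : (1-u)*((x-a)*(x-b)) = 0 := by linarith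
      have z2 : u*((y-a)*(y-b)) = 0 := by linarith
      have hu : u = 1 := by
        by_contra h
        have h1u' : 0 < 1 - u := lt_of_le_of_ne h1u (by intro hh; apply h; linarith)
        have : (x-a)*(x-b) = 0 := by
          rcases mul_eq_zero.1 z1 with h' | h'
          · exact absurd h' h1u'.ne'
          · exact h'
        nlinarith
      have hy : y = b := by
        rw [hu, one_mul] at z2
        rcases mul_eq_zero.1 z2 with h' | h'
        · nlinarith
        · linarith
      have hz : (y-a)*(y-b)*(y-c) = 0 := by rw [hy]; ring
      rw [hu]
      linarith
  rcases le_or_gt y c with hyc | hcy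
  · -- b < y ≤ c : x ∉ (a,b)
    have hy : (y-a)*(y-b)*(y-c) ≤ 0 := ppn (by linarith) (by linarith) (by linarith)
    have hxnab : x ≤ a ∨ b ≤ x := by
      by_contra h
      push_neg at h
      exact C1 ⟨h.1, h.2, hby⟩
    have hx : (x-a)*(x-b)*(x-c) ≤ 0 := by
      rcases hxnab with h | h
      · exact neg3 (by linarith) (by linarith) (by linarith)
      · exact ppn (by linarith) (by linarith) (by linarith)
    nlinarith [mul_nonpos_of_nonneg_of_nonpos h1u hx, mul_nonpos_of_nonneg_of_nonpos hu0 hy]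
  · -- c < y : x ≤ a ∨ c ≤ x
    have hxn : x ≤ a ∨ c ≤ x := by
      by_contra h
      push_neg at h
      exact C3 ⟨h.1, h.2, hcy⟩
    rcases hxn with hxa | hcx
    · -- x ≤ a
      have h₁ : 0 ≤ (1-u)*((x-a)*(x-c))*(y-x) := by
        have : 0 ≤ (x-a)*(x-c) := by nlinarith
        have := mul_nonneg (mul_nonneg h1u this) (by linarith : (0:ℝ) ≤ y - x)
        linarith
      have h₂ : (y-b)*((1-u)*((x-a)*(x-c)) + u*((y-a)*(y-c))) ≤ 0 :=
        mul_nonpos_of_nonneg_of_nonpos (by linarith) Hac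
      nlinarith [h₁, h₂]
    · -- c ≤ x : forces u = 0, x = c
      have e1 : 0 ≤ (1-u)*((x-a)*(x-c)) := by
        apply mul_nonneg h1u
        nlinarith
      have e2 : 0 ≤ u*((y-a)*(y-c)) := by
        apply mul_nonneg hu0
        nlinarith
      have z1 : (1-u)*((x-a)*(x-c)) = 0 := by linarith
      have z2 : u*((y-a)*(y-c)) = 0 := by linarith
      have hu : u = 0 := by
        rcases mul_eq_zero.1 z2 with h' | h'
        · exact h'
        · nlinarith
      have z1' : (x-a)*(x-c) = 0 := by
        rw [hu] at z1
        linarith [z1]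
      have hx : x = c := by
        rcases mul_eq_zero.1 z1' with h' | h'
        · linarith
        · linarith
      have hz : (x-a)*(x-b)*(x-c) = 0 := by rw [hx]; ring
      rw [hu]
      linarith


/-! ### Combinatorics of crossing edges -/

/-- `f` left-crosses `g`. -/
def LeftX {n : ℕ} (f g : Finset (Fin n)) : Prop :=
  ∃ a b c d : Fin n, a < b ∧ b < c ∧ c < d ∧ f = {a, c} ∧ g = {b, d}

lemma pair_inj {a c a' c' : Fin n} (hac : a < c) (h' : a' < c')
    (h : ({a, c} : Finset (Fin n)) = {a', c'}) : a = a' ∧ c = c' := by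
  have ha : a = a' ∨ a = c' := by
    have : a ∈ ({a', c'} : Finset (Fin n)) := h ▸ (by simp)
    simpa using this
  have hc : c = a' ∨ c = c' := by
    have : c ∈ ({a', c'} : Finset (Fin n)) := h ▸ (by simp)
    simpa using this
  have ha2 : a' = a ∨ a' = c := by
    have : a' ∈ ({a, c} : Finset (Fin n)) := h.symm ▸ (by simp)
    simpa using this
  have h1 : a.1 = a'.1 ∨ a.1 = c'.1 := by rcases ha with h | h <;> simp [h]
  have h2 : c.1 = a'.1 ∨ c.1 = c'.1 := by rcases hc with h | h <;> simp [h]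
  have h3 : a'.1 = a.1 ∨ a'.1 = c.1 := by rcases ha2 with h | h <;> simp [h]
  have hac1 : a.1 < c.1 := hac
  have h'1 : a'.1 < c'.1 := h'
  refine ⟨Fin.ext ?_, Fin.ext ?_⟩ <;> omega

lemma leftX_iff {x y x' y' : Fin n} (h1 : x < y) (h2 : x' < y') :
    LeftX ({x, y} : Finset (Fin n)) {x', y'} ↔ (x < x' ∧ x' < y ∧ y < y') := by
  constructor
  · rintro ⟨a, b, c, d, hab, hbc, hcd, hf, hg⟩
    obtain ⟨rfl, rfl⟩ := pair_inj (hab.trans hbc) h1 hf.symm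
    obtain ⟨rfl, rfl⟩ := pair_inj (hbc.trans hcd) h2 hg.symm
    exact ⟨hab, hbc, hcd⟩
  · rintro ⟨h3, h4, h5⟩
    exact ⟨x, x', y, y', h3, h4, h5, rfl, rfl⟩

lemma leftX_ne {f g : Finset (Fin n)} (h : LeftX f g) : f ≠ g := by
  rcases h with ⟨a, b, c, d, hab, hbc, hcd, rfl, rfl⟩
  intro hEq
  have : b = a ∨ b = c := by
    have : b ∈ ({a, c} : Finset (Fin n)) := hEq ▸ (by simp)
    simpa using this
  rcases this with rfl | rfl
  · exact absurd hab (lt_irrefl _)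
  · exact absurd hbc (lt_irrefl _)

lemma leftX_irrefl (f : Finset (Fin n)) : ¬ LeftX f f := fun h => leftX_ne h rfl


/-- Key structural lemma: below any `M`-edge spanning a nontrivial gap there is a vertex
joined in `M` to both endpoints. -/
lemma struct {E₁ E₃ M : Finset (Finset (Fin n))}
    (hE₁edge : ∀ e ∈ E₁, ∃ a b : Fin n, a < b ∧ e = {a, b})
    (hE₃edge : ∀ e ∈ E₃, ∃ a b : Fin n, a < b ∧ e = {a, b})
    (hK1 : ∀ e ∈ E₁, ∀ f ∈ E₃, ¬ LeftX f e)
    (hMedge : ∀ g ∈ M, ∃ a b : Fin n, a < b ∧ g = {a, b})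
    (hMnc : ∀ g ∈ M, ∀ h ∈ M, ¬ LeftX g h)
    (hMA1 : ∀ g ∈ M, ∀ e ∈ E₁, ¬ LeftX g e)
    (hMA3 : ∀ g ∈ M, ∀ e ∈ E₃, ¬ LeftX e g)
    (hMmax : ∀ x y : Fin n, x < y → (∀ e ∈ E₁, ¬ LeftX {x, y} e) →
      (∀ e ∈ E₃, ¬ LeftX e {x, y}) →
      (∀ h ∈ M, ¬ LeftX {x, y} h ∧ ¬ LeftX h {x, y}) → ({x, y} : Finset (Fin n)) ∈ M)
    {i k : Fin n} (hik : ({i, k} : Finset (Fin n)) ∈ M) (hlt : i < k)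
    (hgap : ∃ v, i < v ∧ v < k) :
    ∃ j, i < j ∧ j < k ∧ ({i, j} : Finset (Fin n)) ∈ M ∧ ({j, k} : Finset (Fin n)) ∈ M := by
  classical
  set Blocked : Fin n → Prop := fun v => ∃ g ∈ M, ∃ x y : Fin n, x < y ∧ g = {x, y} ∧
    i ≤ x ∧ y ≤ k ∧ x < v ∧ v < y ∧ ¬(x = i ∧ y = k) with hBdef
  set V : Finset (Fin n) := (Finset.Ioo i k).filter (fun v => ¬ Blocked v) with hVdef
  have hVmem : ∀ v, v ∈ V ↔ (i < v ∧ v < k ∧ ¬ Blocked v) := by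
    intro v
    simp [hVdef, Finset.mem_filter, Finset.mem_Ioo, and_assoc]
  -- V is nonempty
  have hVne : V.Nonempty := by
    by_cases hY : ∃ y', i < y' ∧ y' < k ∧ ({i, y'} : Finset (Fin n)) ∈ M
    · set Y : Finset (Fin n) :=
        (Finset.Ioo i k).filter (fun y' => ({i, y'} : Finset (Fin n)) ∈ M) with hYdef
      have hYmem : ∀ y', y' ∈ Y ↔ (i < y' ∧ y' < k ∧ ({i, y'} : Finset (Fin n)) ∈ M) := by
        intro y'
        simp [hYdef, Finset.mem_filter, Finset.mem_Ioo, and_assoc]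
      have hYne : Y.Nonempty := by
        obtain ⟨y', h1, h2, h3⟩ := hY
        exact ⟨y', (hYmem y').2 ⟨h1, h2, h3⟩⟩
      obtain ⟨hv1, hv2, hv3⟩ := (hYmem _).1 (Y.max'_mem hYne)
      refine ⟨Y.max' hYne, (hVmem _).2 ⟨hv1, hv2, ?_⟩⟩
      rintro ⟨g, hg, x, y, hxy, rfl, hix, hyk, hxv, hvy, hne⟩
      by_cases hxi : i < x
      · exact hMnc _ hv3 _ hg ((leftX_iff hv1 hxy).2 ⟨hxi, hxv, hvy⟩)
      · have hxeq : x = i := le_antisymm (not_lt.1 hxi) hix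
        subst hxeq
        have hy1 : y < k := lt_of_le_of_ne hyk (fun h => hne ⟨rfl, h⟩)
        have hyY : y ∈ Y := (hYmem y).2 ⟨hxy, hy1, hg⟩
        exact absurd (Y.le_max' y hyY) (not_le.2 hvy)
    · obtain ⟨v0, hv0⟩ := hgap
      have hIoo : (Finset.Ioo i k).Nonempty := ⟨v0, Finset.mem_Ioo.2 hv0⟩
      have hvm := Finset.mem_Ioo.1 ((Finset.Ioo i k).min'_mem hIoo)
      refine ⟨(Finset.Ioo i k).min' hIoo, (hVmem _).2 ⟨hvm.1, hvm.2, ?_⟩⟩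
      rintro ⟨g, hg, x, y, hxy, rfl, hix, hyk, hxv, hvy, hne⟩
      by_cases hxi : i < x
      · have : (Finset.Ioo i k).min' hIoo ≤ x :=
          Finset.min'_le _ x (Finset.mem_Ioo.2 ⟨hxi, hxv.trans hvm.2⟩)
        exact absurd hxv (not_lt.2 this)
      · have hxeq : x = i := le_antisymm (not_lt.1 hxi) hix
        subst hxeq
        have hy1 : y < k := lt_of_le_of_ne hyk (fun h => hne ⟨rfl, h⟩)
        exact hY ⟨y, hxy, hy1, hg⟩
  -- candidate edges do not cross M
  have hNCiv : ∀ v ∈ V, ∀ h ∈ M, ¬ LeftX {i, v} h ∧ ¬ LeftX h {i, v} := by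
    intro v hv h hh
    obtain ⟨iv, vk, hnb⟩ := (hVmem v).1 hv
    obtain ⟨x, y, hxy, rfl⟩ := hMedge h hh
    constructor
    · intro hL
      obtain ⟨h1, h2, h3⟩ := (leftX_iff iv hxy).1 hL
      by_cases hyk : y ≤ k
      · exact hnb ⟨{x, y}, hh, x, y, hxy, rfl, h1.le, hyk, h2, h3,
          fun hp => absurd h1 (by rw [hp.1]; exact lt_irrefl _)⟩
      · push_neg at hyk
        exact hMnc _ hik _ hh ((leftX_iff hlt hxy).2 ⟨h1, h2.trans vk, hyk⟩)
    · intro hL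
      obtain ⟨h1, h2, h3⟩ := (leftX_iff hxy iv).1 hL
      exact hMnc _ hh _ hik ((leftX_iff hxy hlt).2 ⟨h1, h2, h3.trans vk⟩)
  have hNCvk : ∀ v ∈ V, ∀ h ∈ M, ¬ LeftX {v, k} h ∧ ¬ LeftX h {v, k} := by
    intro v hv h hh
    obtain ⟨iv, vk, hnb⟩ := (hVmem v).1 hv
    obtain ⟨x, y, hxy, rfl⟩ := hMedge h hh
    constructor
    · intro hL
      obtain ⟨h1, h2, h3⟩ := (leftX_iff vk hxy).1 hL
      exact hMnc _ hik _ hh ((leftX_iff hlt hxy).2 ⟨iv.trans h1, h2, h3⟩)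
    · intro hL
      obtain ⟨h1, h2, h3⟩ := (leftX_iff hxy vk).1 hL
      by_cases hxi : i ≤ x
      · exact hnb ⟨{x, y}, hh, x, y, hxy, rfl, hxi, h3.le, h1, h2,
          fun hp => absurd h3 (by rw [hp.2]; exact lt_irrefl _)⟩
      · push_neg at hxi
        exact hMnc _ hh _ hik ((leftX_iff hxy hlt).2 ⟨hxi, iv.trans h2, h3⟩)
  -- allowedness of candidate edges, partial
  have hA1vk : ∀ v, i < v → v < k → ∀ e ∈ E₁, ¬ LeftX ({v, k} : Finset (Fin n)) e := by
    intro v iv vk e he hL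
    obtain ⟨a, c, hac, rfl⟩ := hE₁edge e he
    obtain ⟨h1, h2, h3⟩ := (leftX_iff vk hac).1 hL
    exact hMA1 _ hik _ he ((leftX_iff hlt hac).2 ⟨iv.trans h1, h2, h3⟩)
  have hA3iv : ∀ v, i < v → v < k → ∀ e ∈ E₃, ¬ LeftX e ({i, v} : Finset (Fin n)) := by
    intro v iv vk e he hL
    obtain ⟨a, c, hac, rfl⟩ := hE₃edge e he
    obtain ⟨h1, h2, h3⟩ := (leftX_iff hac iv).1 hL
    exact hMA3 _ hik _ he ((leftX_iff hac hlt).2 ⟨h1, h2, h3.trans vk⟩)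
  set B1 : Fin n → Prop := fun v => ∃ e ∈ E₁, LeftX {i, v} e with hB1def
  set B3 : Fin n → Prop := fun v => ∃ e ∈ E₃, LeftX e {v, k} with hB3def
  have hIvM : ∀ v ∈ V, ¬ B1 v → ({i, v} : Finset (Fin n)) ∈ M := by
    intro v hv hnB1
    obtain ⟨iv, vk, hnb⟩ := (hVmem v).1 hv
    refine hMmax i v iv ?_ (hA3iv v iv vk) (hNCiv v hv)
    intro e he hL
    exact hnB1 ⟨e, he, hL⟩
  have hVkM : ∀ v ∈ V, ¬ B3 v → ({v, k} : Finset (Fin n)) ∈ M := by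
    intro v hv hnB3
    obtain ⟨iv, vk, hnb⟩ := (hVmem v).1 hv
    refine hMmax v k vk (hA1vk v iv vk) ?_ (hNCvk v hv)
    intro e he hL
    exact hnB3 ⟨e, he, hL⟩
  -- the maximum of V is not E₃-blocked
  have hmaxV : ¬ B3 (V.max' hVne) := by
    obtain ⟨iv, vk, hnb⟩ := (hVmem _).1 (V.max'_mem hVne)
    rintro ⟨e, he, hL⟩
    obtain ⟨a, c, hac, rfl⟩ := hE₃edge e he
    obtain ⟨h1, h2, h3⟩ := (leftX_iff hac vk).1 hL
    have hia : i ≤ a := by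
      by_contra hlt'
      push_neg at hlt'
      exact hMA3 _ hik _ he ((leftX_iff hac hlt).2 ⟨hlt', iv.trans h2, h3⟩)
    have hcB : Blocked c := by
      by_contra hnbc
      have hcV : c ∈ V := (hVmem c).2 ⟨hia.trans_lt (h1.trans h2), h3, hnbc⟩
      exact absurd (V.le_max' c hcV) (not_le.2 h2)
    obtain ⟨g, hg, x, y, hxy, rfl, hix, hyk, hxc, hcy, hne⟩ := hcB
    have hxa : x ≤ a := by
      by_contra hax
      push_neg at hax
      exact hMA3 _ hg _ he ((leftX_iff hac hxy).2 ⟨hax, hxc, hcy⟩)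
    exact hnb ⟨{x, y}, hg, x, y, hxy, rfl, hix, hyk, hxa.trans_lt h1, h2.trans hcy, hne⟩
  -- descent step
  have hstep : ∀ v ∈ V, ¬ B3 v → ({i, v} : Finset (Fin n)) ∉ M →
      ∃ a', a' ∈ V ∧ a' < v ∧ ¬ B3 a' := by
    intro v hv hnB3 hIvnM
    obtain ⟨iv, vk, hnbv⟩ := (hVmem v).1 hv
    have hB1v : B1 v := by
      by_contra h
      exact hIvnM (hIvM v hv h)
    obtain ⟨e, he, hL⟩ := hB1v
    obtain ⟨a, c, hac, rfl⟩ := hE₁edge e he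
    obtain ⟨h1, h2, h3⟩ := (leftX_iff iv hac).1 hL
    have hck : c ≤ k := by
      by_contra h
      push_neg at h
      exact hMA1 _ hik _ he ((leftX_iff hlt hac).2 ⟨h1, h2.trans vk, h⟩)
    have haV : a ∈ V := by
      refine (hVmem a).2 ⟨h1, h2.trans vk, ?_⟩
      rintro ⟨g, hg, x, y, hxy, rfl, hix, hyk, hxa, hay, hne⟩
      by_cases hyv : v < y
      · exact hnbv ⟨{x, y}, hg, x, y, hxy, rfl, hix, hyk, hxa.trans h2, hyv, hne⟩
      · have hyv' : y ≤ v := not_lt.1 hyv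
        exact hMA1 _ hg _ he ((leftX_iff hxy hac).2 ⟨hxa, hay, hyv'.trans_lt h3⟩)
    have hB3a : ¬ B3 a := by
      rintro ⟨f, hf, hLf⟩
      obtain ⟨a', c', h'ac, rfl⟩ := hE₃edge f hf
      obtain ⟨g1, g2, g3⟩ := (leftX_iff h'ac (h2.trans vk)).1 hLf
      by_cases hcc : c' < c
      · exact hK1 _ he _ hf ((leftX_iff h'ac hac).2 ⟨g1, g2, hcc⟩)
      · exact hnB3 ⟨{a', c'}, hf,
          (leftX_iff h'ac vk).2 ⟨g1.trans h2, h3.trans_le (not_lt.1 hcc), g3⟩⟩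
    exact ⟨a, haV, h2, hB3a⟩
  -- strong induction
  have main : ∀ m : ℕ, ∀ v ∈ V, v.1 ≤ m → ¬ B3 v →
      ∃ j, i < j ∧ j < k ∧ ({i, j} : Finset (Fin n)) ∈ M ∧ ({j, k} : Finset (Fin n)) ∈ M := by
    intro m
    induction m with
    | zero =>
      intro v hv hle _
      obtain ⟨ivlt, _, _⟩ := (hVmem v).1 hv
      have : i.1 < v.1 := ivlt
      omega
    | succ m ih =>
      intro v hv hle hnB3
      by_cases hiv : ({i, v} : Finset (Fin n)) ∈ M
      · obtain ⟨ivlt, vklt, _⟩ := (hVmem v).1 hv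
        exact ⟨v, ivlt, vklt, hiv, hVkM v hv hnB3⟩
      · obtain ⟨a', ha'V, ha'lt, ha'B3⟩ := hstep v hv hnB3 hiv
        have : a'.1 < v.1 := ha'lt
        exact ih a' ha'V (by omega) ha'B3
  exact main n (V.max' hVne) (V.max'_mem hVne) (V.max' hVne).is_lt.le hmaxV


/-- Separation/support lemma: if an edge functional separates `σ` from `τ` (weakly), any
common point lies in the convex hull of the common zero vertices. -/
lemma sep_core (ht : StrictMono t) {σ τ : Finset (Fin n)} {g1 g2 : Fin n} {s : ℝ}
    (hs : s ≠ 0)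
    (hσs : ∀ l ∈ σ, 0 ≤ s * ((t l - t g1) * (t l - t g2)))
    (hτs : ∀ l ∈ τ, s * ((t l - t g1) * (t l - t g2)) ≤ 0)
    (hτz : ∀ l ∈ τ, (t l - t g1) * (t l - t g2) = 0 → l ∈ σ)
    {p : Fin 2 → ℝ} (hpσ : p ∈ mcConv 2 t σ) (hpτ : p ∈ mcConv 2 t τ) :
    p ∈ mcConv 2 t (σ ∩ τ) := by
  classical
  obtain ⟨w, hw0, hw1, hwc⟩ := (mem_mcConv ht (by norm_num) σ p).1 hpσ
  obtain ⟨μ, hμ0, hμ1, hμc⟩ := (mem_mcConv ht (by norm_num) τ p).1 hpτ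
  have Eσ := comb_eval₂ σ w p hw1 hwc (t g1) (t g2)
  have Eτ := comb_eval₂ τ μ p hμ1 hμc (t g1) (t g2)
  have h1 : 0 ≤ s * (p 1 - (t g1 + t g2) * p 0 + t g1 * t g2) := by
    rw [Eσ, Finset.mul_sum]
    apply Finset.sum_nonneg
    intro l hl
    have e : s * (w l * ((t l - t g1) * (t l - t g2)))
        = w l * (s * ((t l - t g1) * (t l - t g2))) := by ring
    rw [e]
    exact mul_nonneg (hw0 l hl) (hσs l hl)
  have h2 : s * (p 1 - (t g1 + t g2) * p 0 + t g1 * t g2) ≤ 0 := by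
    rw [Eτ, Finset.mul_sum]
    apply Finset.sum_nonpos
    intro l hl
    have e : s * (μ l * ((t l - t g1) * (t l - t g2)))
        = μ l * (s * ((t l - t g1) * (t l - t g2))) := by ring
    rw [e]
    exact mul_nonpos_of_nonneg_of_nonpos (hμ0 l hl) (hτs l hl)
  have hz0 : s * (p 1 - (t g1 + t g2) * p 0 + t g1 * t g2) = 0 := le_antisymm h2 h1
  have hsum0 : ∑ l ∈ τ, μ l * (s * ((t l - t g1) * (t l - t g2))) = 0 := by
    have : ∑ l ∈ τ, μ l * (s * ((t l - t g1) * (t l - t g2)))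
        = s * (p 1 - (t g1 + t g2) * p 0 + t g1 * t g2) := by
      rw [Eτ, Finset.mul_sum]
      exact Finset.sum_congr rfl (fun l _ => by ring)
    rw [this, hz0]
  have hterm : ∀ l ∈ τ, μ l * (s * ((t l - t g1) * (t l - t g2))) = 0 := by
    rw [← Finset.sum_eq_zero_iff_of_nonpos]
    · exact hsum0
    · intro l hl
      exact mul_nonpos_of_nonneg_of_nonpos (hμ0 l hl) (hτs l hl)
  have hvan : ∀ l ∈ τ, l ∉ σ ∩ τ → μ l = 0 := by
    intro l hl hno
    have hlσ : l ∉ σ := fun hσl => hno (Finset.mem_inter.2 ⟨hσl, hl⟩)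
    rcases mul_eq_zero.1 (hterm l hl) with h | h
    · exact h
    · rcases mul_eq_zero.1 h with h' | h'
      · exact absurd h' hs
      · exact absurd (hτz l hl h') hlσ
  rw [mem_mcConv ht (by norm_num)]
  refine ⟨μ, fun l hl => hμ0 l (Finset.mem_inter.1 hl).2, ?_, ?_⟩
  · rw [← hμ1]
    exact Finset.sum_subset Finset.inter_subset_right hvan
  · intro i
    rw [hμc i]
    exact (Finset.sum_subset Finset.inter_subset_right
      (fun l hl hno => by rw [hvan l hl hno, zero_mul])).symm

lemma tri_pairs {a b c x y : Fin n} (hx : x ∈ ({a, b, c} : Finset (Fin n)))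
    (hy : y ∈ ({a, b, c} : Finset (Fin n))) (hxy : x ≠ y) :
    ({x, y} : Finset (Fin n)) = {a, b} ∨ ({x, y} : Finset (Fin n)) = {b, c} ∨
      ({x, y} : Finset (Fin n)) = {a, c} := by
  have hx' : x = a ∨ x = b ∨ x = c := by simpa using hx
  have hy' : y = a ∨ y = b ∨ y = c := by simpa using hy
  rcases hx' with rfl | rfl | rfl <;> rcases hy' with rfl | rfl | rfl <;>
    first
      | exact absurd rfl hxy
      | exact Or.inl rfl
      | exact Or.inr (Or.inl rfl)
      | exact Or.inr (Or.inr rfl)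
      | exact Or.inl (Finset.pair_comm _ _)
      | exact Or.inr (Or.inl (Finset.pair_comm _ _))
      | exact Or.inr (Or.inr (Finset.pair_comm _ _))

lemma tri_card {a b c : Fin n} (hab : a < b) (hbc : b < c) :
    ({a, b, c} : Finset (Fin n)).card = 3 := by
  rw [Finset.card_insert_of_notMem, Finset.card_insert_of_notMem, Finset.card_singleton]
  · simp [hbc.ne]
  · simp [hab.ne, (hab.trans hbc).ne]

/-- Two distinct triangles all of whose edges lie in the noncrossing family `M`
intersect in the hull of their common vertices. -/
lemma tri_disjoint (ht : StrictMono t) {M : Finset (Finset (Fin n))}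
    (hMnc : ∀ g ∈ M, ∀ h ∈ M, ¬ LeftX g h)
    {a b c a' b' c' : Fin n} (hab : a < b) (hbc : b < c) (h'ab : a' < b') (h'bc : b' < c')
    (e1 : ({a, b} : Finset (Fin n)) ∈ M) (e2 : ({b, c} : Finset (Fin n)) ∈ M)
    (e3 : ({a, c} : Finset (Fin n)) ∈ M)
    (f1 : ({a', b'} : Finset (Fin n)) ∈ M) (f2 : ({b', c'} : Finset (Fin n)) ∈ M)
    (f3 : ({a', c'} : Finset (Fin n)) ∈ M)
    (hne : ({a, b, c} : Finset (Fin n)) ≠ {a', b', c'}) :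
    ∀ p, p ∈ mcConv 2 t {a, b, c} → p ∈ mcConv 2 t {a', b', c'} →
      p ∈ mcConv 2 t (({a, b, c} : Finset (Fin n)) ∩ {a', b', c'}) := by
  classical
  intro p hpσ hpτ
  -- a vertex of τ not in σ
  have hvex : ∃ v, v ∈ ({a', b', c'} : Finset (Fin n)) ∧ v ∉ ({a, b, c} : Finset (Fin n)) := by
    by_contra h
    push_neg at h
    have hsub : ({a', b', c'} : Finset (Fin n)) ⊆ {a, b, c} := h
    have := Finset.eq_of_subset_of_card_le hsub
      (by rw [tri_card hab hbc, tri_card h'ab h'bc])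
    exact hne this.symm
  obtain ⟨v, hvτ, hvσ⟩ := hvex
  have hva : v ≠ a := fun h => hvσ (by simp [h])
  have hvb : v ≠ b := fun h => hvσ (by simp [h])
  have hvc : v ≠ c := fun h => hvσ (by simp [h])
  have hpair : ∀ l ∈ ({a', b', c'} : Finset (Fin n)), l ≠ v →
      ({v, l} : Finset (Fin n)) ∈ M := by
    intro l hl hlv
    rcases tri_pairs hvτ hl (hlv.symm ∘ Eq.symm ∘ Eq.symm) with h | h | h
    · rw [h]; exact f1
    · rw [h]; exact f2
    · rw [h]; exact f3
  have tab := ht hab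
  have tbc := ht hbc
  have tac := ht (hab.trans hbc)
  rcases lt_trichotomy v a with hvlta | hveqa | hagtv
  · -- v < a : separate along {a,c} with s = -1
    refine sep_core ht (g1 := a) (g2 := c) (s := (-1:ℝ)) (by norm_num) ?_ ?_ ?_ hpσ hpτ
    · intro l hl
      have hl' : l = a ∨ l = b ∨ l = c := by simpa using hl
      rcases hl' with rfl | rfl | rfl <;> nlinarith
    · intro l hl
      have hlnot : ¬ (a < l ∧ l < c) := by
        rintro ⟨h1, h2⟩
        have hlv : l ≠ v := fun h => absurd (h ▸ h1) (not_lt.2 hvlta.le)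
        have hLX : LeftX ({v, l} : Finset (Fin n)) {a, c} :=
          (leftX_iff (hvlta.trans h1) (hab.trans hbc)).2 ⟨hvlta, h1, h2⟩
        exact hMnc _ (hpair l hl hlv) _ e3 hLX
      rcases not_and_or.1 hlnot with h | h
      · have : l ≤ a := not_lt.1 h
        nlinarith [ht.le_iff_le.2 this]
      · have : c ≤ l := not_lt.1 h
        nlinarith [ht.le_iff_le.2 this]
    · intro l _ hz
      rcases mul_eq_zero.1 hz with h | h
      · have : l = a := ht.injective (by linarith)
        simp [this]
      · have : l = c := ht.injective (by linarith)
        simp [this]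
  · exact absurd hveqa hva
  rcases lt_trichotomy v b with hvltb | hveqb | hbgtv
  · -- a < v < b : separate along {a,b} with s = 1
    refine sep_core ht (g1 := a) (g2 := b) (s := (1:ℝ)) (by norm_num) ?_ ?_ ?_ hpσ hpτ
    · intro l hl
      have hl' : l = a ∨ l = b ∨ l = c := by simpa using hl
      rcases hl' with rfl | rfl | rfl <;> nlinarith
    · intro l hl
      have hlin : a ≤ l ∧ l ≤ b := by
        constructor
        · by_contra h
          push_neg at h
          have hlv : l ≠ v := fun hh => absurd (hh ▸ h) (not_lt.2 hagtv.le)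
          have hLX : LeftX ({l, v} : Finset (Fin n)) {a, b} :=
            (leftX_iff (h.trans hagtv) hab).2 ⟨h, hagtv, hvltb⟩
          rw [Finset.pair_comm] at hLX
          exact hMnc _ (hpair l hl hlv) _ e1 hLX
        · by_contra h
          push_neg at h
          have hlv : l ≠ v := fun hh => absurd (hh ▸ h) (not_lt.2 hvltb.le)
          have hLX : LeftX ({a, b} : Finset (Fin n)) {v, l} :=
            (leftX_iff hab (hvltb.trans h)).2 ⟨hagtv, hvltb, h⟩
          exact hMnc _ e1 _ (hpair l hl hlv) hLX
      nlinarith [ht.le_iff_le.2 hlin.1, ht.le_iff_le.2 hlin.2]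
    · intro l _ hz
      rcases mul_eq_zero.1 hz with h | h
      · have : l = a := ht.injective (by linarith)
        simp [this]
      · have : l = b := ht.injective (by linarith)
        simp [this]
  · exact absurd hveqb hvb
  rcases lt_trichotomy v c with hvltc | hveqc | hcgtv
  · -- b < v < c : separate along {b,c} with s = 1
    refine sep_core ht (g1 := b) (g2 := c) (s := (1:ℝ)) (by norm_num) ?_ ?_ ?_ hpσ hpτ
    · intro l hl
      have hl' : l = a ∨ l = b ∨ l = c := by simpa using hl
      rcases hl' with rfl | rfl | rfl <;> nlinarith
    · intro l hl
      have hlin : b ≤ l ∧ l ≤ c := by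
        constructor
        · by_contra h
          push_neg at h
          have hlv : l ≠ v := fun hh => absurd (hh ▸ h) (not_lt.2 hbgtv.le)
          have hLX : LeftX ({l, v} : Finset (Fin n)) {b, c} :=
            (leftX_iff (h.trans hbgtv) hbc).2 ⟨h, hbgtv, hvltc⟩
          rw [Finset.pair_comm] at hLX
          exact hMnc _ (hpair l hl hlv) _ e2 hLX
        · by_contra h
          push_neg at h
          have hlv : l ≠ v := fun hh => absurd (hh ▸ h) (not_lt.2 hvltc.le)
          have hLX : LeftX ({b, c} : Finset (Fin n)) {v, l} :=
            (leftX_iff hbc (hvltc.trans h)).2 ⟨hbgtv, hvltc, h⟩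
          exact hMnc _ e2 _ (hpair l hl hlv) hLX
      nlinarith [ht.le_iff_le.2 hlin.1, ht.le_iff_le.2 hlin.2]
    · intro l _ hz
      rcases mul_eq_zero.1 hz with h | h
      · have : l = b := ht.injective (by linarith)
        simp [this]
      · have : l = c := ht.injective (by linarith)
        simp [this]
  · exact absurd hveqc hvc
  · -- c < v : separate along {a,c} with s = -1
    refine sep_core ht (g1 := a) (g2 := c) (s := (-1:ℝ)) (by norm_num) ?_ ?_ ?_ hpσ hpτ
    · intro l hl
      have hl' : l = a ∨ l = b ∨ l = c := by simpa using hl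
      rcases hl' with rfl | rfl | rfl <;> nlinarith
    · intro l hl
      have hlnot : ¬ (a < l ∧ l < c) := by
        rintro ⟨h1, h2⟩
        have hlv : l ≠ v := fun h => absurd (h ▸ h2) (not_lt.2 hcgtv.le)
        have hLX : LeftX ({a, c} : Finset (Fin n)) {l, v} :=
          (leftX_iff (hab.trans hbc) (h2.trans hcgtv)).2 ⟨h1, h2, hcgtv⟩
        have hm : ({l, v} : Finset (Fin n)) ∈ M := by
          rw [Finset.pair_comm]; exact hpair l hl hlv
        exact hMnc _ e3 _ hm hLX
      rcases not_and_or.1 hlnot with h | h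
      · have : l ≤ a := not_lt.1 h
        nlinarith [ht.le_iff_le.2 this]
      · have : c ≤ l := not_lt.1 h
        nlinarith [ht.le_iff_le.2 this]
    · intro l _ hz
      rcases mul_eq_zero.1 hz with h | h
      · have : l = a := ht.injective (by linarith)
        simp [this]
      · have : l = c := ht.injective (by linarith)
        simp [this]


/-- The set of triangles all of whose edges belong to `M`. -/
def TriSet {n : ℕ} (M : Finset (Finset (Fin n))) : Finset (Finset (Fin n)) :=
  Finset.filter (fun σ => ∃ a b c : Fin n, a < b ∧ b < c ∧ σ = {a, b, c} ∧
    ({a, b} : Finset (Fin n)) ∈ M ∧ ({b, c} : Finset (Fin n)) ∈ M ∧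
    ({a, c} : Finset (Fin n)) ∈ M)
    (Finset.powersetCard 3 Finset.univ)

lemma mem_TriSet {M : Finset (Finset (Fin n))} {σ : Finset (Fin n)} :
    σ ∈ TriSet M ↔ ∃ a b c : Fin n, a < b ∧ b < c ∧ σ = {a, b, c} ∧
      ({a, b} : Finset (Fin n)) ∈ M ∧ ({b, c} : Finset (Fin n)) ∈ M ∧
      ({a, c} : Finset (Fin n)) ∈ M := by
  unfold TriSet
  rw [Finset.mem_filter]
  constructor
  · exact fun h => h.2
  · rintro ⟨a, b, c, hab, hbc, rfl, h1, h2, h3⟩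
    refine ⟨Finset.mem_powersetCard.2 ⟨Finset.subset_univ _, tri_card hab hbc⟩,
      a, b, c, hab, hbc, rfl, h1, h2, h3⟩

lemma polygon_sign_ge (ht : StrictMono t) {p : Fin 2 → ℝ}
    (hp : p ∈ mcConv 2 t Finset.univ) {x y : Fin n} (hxy : x < y)
    (hcov : ∀ z, ¬(x < z ∧ z < y)) :
    0 ≤ p 1 - (t x + t y) * p 0 + t x * t y := by
  obtain ⟨w, hw0, hw1, hwc⟩ := (mem_mcConv ht (by norm_num) Finset.univ p).1 hp
  rw [comb_eval₂ Finset.univ w p hw1 hwc (t x) (t y)]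
  apply Finset.sum_nonneg
  intro l hl
  apply mul_nonneg (hw0 l hl)
  rcases le_or_gt l x with h | h
  · have h1 : t l ≤ t x := ht.le_iff_le.2 h
    have h2 : t l < t y := ht (h.trans_lt hxy)
    exact mul_nonneg_of_nonpos_of_nonpos (by linarith) (by linarith)
  · have h2 : y ≤ l := not_lt.1 (fun hy => hcov l ⟨h, hy⟩)
    have h1 : t x < t l := ht h
    have h3 : t y ≤ t l := ht.le_iff_le.2 h2
    exact mul_nonneg (by linarith) (by linarith)

lemma polygon_sign_le (ht : StrictMono t) {p : Fin 2 → ℝ}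
    (hp : p ∈ mcConv 2 t Finset.univ) {x y : Fin n} (hxy : x < y)
    (hbot : ∀ z, ¬ z < x) (htop : ∀ z, ¬ y < z) :
    p 1 - (t x + t y) * p 0 + t x * t y ≤ 0 := by
  obtain ⟨w, hw0, hw1, hwc⟩ := (mem_mcConv ht (by norm_num) Finset.univ p).1 hp
  rw [comb_eval₂ Finset.univ w p hw1 hwc (t x) (t y)]
  apply Finset.sum_nonpos
  intro l hl
  apply mul_nonpos_of_nonneg_of_nonpos (hw0 l hl)
  have h1 : x ≤ l := not_lt.1 (hbot l)
  have h2 : l ≤ y := not_lt.1 (htop l)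
  exact mul_nonpos_of_nonneg_of_nonpos (by linarith [ht.le_iff_le.2 h1])
    (by linarith [ht.le_iff_le.2 h2])

/-- Covering: every point of the polygon below an `M`-edge lies in a triangle of
`TriSet M`. -/
lemma cover_aux (ht : StrictMono t) {E₁ E₃ M : Finset (Finset (Fin n))}
    (hE₁edge : ∀ e ∈ E₁, ∃ a b : Fin n, a < b ∧ e = {a, b})
    (hE₃edge : ∀ e ∈ E₃, ∃ a b : Fin n, a < b ∧ e = {a, b})
    (hK1 : ∀ e ∈ E₁, ∀ f ∈ E₃, ¬ LeftX f e)
    (hMedge : ∀ g ∈ M, ∃ a b : Fin n, a < b ∧ g = {a, b})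
    (hMnc : ∀ g ∈ M, ∀ h ∈ M, ¬ LeftX g h)
    (hMA1 : ∀ g ∈ M, ∀ e ∈ E₁, ¬ LeftX g e)
    (hMA3 : ∀ g ∈ M, ∀ e ∈ E₃, ¬ LeftX e g)
    (hMmax : ∀ x y : Fin n, x < y → (∀ e ∈ E₁, ¬ LeftX {x, y} e) →
      (∀ e ∈ E₃, ¬ LeftX e {x, y}) →
      (∀ h ∈ M, ¬ LeftX {x, y} h ∧ ¬ LeftX h {x, y}) → ({x, y} : Finset (Fin n)) ∈ M) :
    ∀ N : ℕ, ∀ i k : Fin n, k.1 - i.1 ≤ N → ({i, k} : Finset (Fin n)) ∈ M → i < k →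
      (∃ v, i < v ∧ v < k) →
      ∀ p : Fin 2 → ℝ, p ∈ mcConv 2 t Finset.univ →
      p 1 - (t i + t k) * p 0 + t i * t k ≤ 0 →
      ∃ σ ∈ TriSet M, p ∈ mcConv 2 t σ := by
  intro N
  induction N with
  | zero =>
    intro i k hN hik hlt _ p hp hsign
    have : i.1 < k.1 := hlt
    omega
  | succ N ih =>
    intro i k hN hik hlt hgap p hp hsign
    obtain ⟨j, hij, hjk, hijM, hjkM⟩ := struct hE₁edge hE₃edge hK1 hMedge hMnc hMA1 hMA3
      hMmax hik hlt hgap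
    by_cases h1 : 0 ≤ p 1 - (t i + t j) * p 0 + t i * t j
    · by_cases h2 : 0 ≤ p 1 - (t j + t k) * p 0 + t j * t k
      · refine ⟨{i, j, k}, mem_TriSet.2 ⟨i, j, k, hij, hjk, rfl, hijM, hjkM, hik⟩, ?_⟩
        exact mem_triangle ht hij hjk p h1 h2 hsign
      · push_neg at h2
        have hgap2 : ∃ v, j < v ∧ v < k := by
          by_contra h
          push_neg at h
          exact absurd (polygon_sign_ge ht hp hjk (fun z hz => (h z hz.1).not_gt hz.2)) h2.not_ge
        have hd1 : i.1 < j.1 := hij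
        have hd2 : j.1 < k.1 := hjk
        exact ih j k (by omega) hjkM hjk hgap2 p hp h2.le
    · push_neg at h1
      have hgap2 : ∃ v, i < v ∧ v < j := by
        by_contra h
        push_neg at h
        exact absurd (polygon_sign_ge ht hp hij (fun z hz => (h z hz.1).not_gt hz.2)) h1.not_ge
      have hd1 : i.1 < j.1 := hij
      have hd2 : j.1 < k.1 := hjk
      exact ih i j (by omega) hijM hij hgap2 p hp h1.le

/-- Boundary-edge face lemma: any covering pair inside an `M`-edge with a gap is contained
in some triangle of `TriSet M`. -/
lemma face_aux {E₁ E₃ M : Finset (Finset (Fin n))}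
    (hE₁edge : ∀ e ∈ E₁, ∃ a b : Fin n, a < b ∧ e = {a, b})
    (hE₃edge : ∀ e ∈ E₃, ∃ a b : Fin n, a < b ∧ e = {a, b})
    (hK1 : ∀ e ∈ E₁, ∀ f ∈ E₃, ¬ LeftX f e)
    (hMedge : ∀ g ∈ M, ∃ a b : Fin n, a < b ∧ g = {a, b})
    (hMnc : ∀ g ∈ M, ∀ h ∈ M, ¬ LeftX g h)
    (hMA1 : ∀ g ∈ M, ∀ e ∈ E₁, ¬ LeftX g e)
    (hMA3 : ∀ g ∈ M, ∀ e ∈ E₃, ¬ LeftX e g)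
    (hMmax : ∀ x y : Fin n, x < y → (∀ e ∈ E₁, ¬ LeftX {x, y} e) →
      (∀ e ∈ E₃, ¬ LeftX e {x, y}) →
      (∀ h ∈ M, ¬ LeftX {x, y} h ∧ ¬ LeftX h {x, y}) → ({x, y} : Finset (Fin n)) ∈ M) :
    ∀ N : ℕ, ∀ i k : Fin n, k.1 - i.1 ≤ N → ({i, k} : Finset (Fin n)) ∈ M → i < k →
      (∃ v, i < v ∧ v < k) →
      ∀ x y : Fin n, i ≤ x → x < y → y ≤ k → (∀ z, ¬(x < z ∧ z < y)) →
      ∃ σ ∈ TriSet M, x ∈ σ ∧ y ∈ σ := by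
  intro N
  induction N with
  | zero =>
    intro i k hN hik hlt _ x y _ _ _ _
    have : i.1 < k.1 := hlt
    omega
  | succ N ih =>
    intro i k hN hik hlt hgap x y hix hxy hyk hcov
    obtain ⟨j, hij, hjk, hijM, hjkM⟩ := struct hE₁edge hE₃edge hK1 hMedge hMnc hMA1 hMA3
      hMmax hik hlt hgap
    have hd1 : i.1 < j.1 := hij
    have hd2 : j.1 < k.1 := hjk
    have hTri : ({i, j, k} : Finset (Fin n)) ∈ TriSet M :=
      mem_TriSet.2 ⟨i, j, k, hij, hjk, rfl, hijM, hjkM, hik⟩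
    rcases le_or_gt y j with hyj | hjy
    · by_cases hgap2 : ∃ v, i < v ∧ v < j
      · exact ih i j (by omega) hijM hij hgap2 x y hix hxy hyj hcov
      · push_neg at hgap2
        have hxi : x = i := by
          rcases eq_or_lt_of_le hix with h | h
          · exact h.symm
          · exact absurd (hxy.trans_le hyj) (hgap2 x h).not_gt
        have hyj' : y = j := by
          rcases eq_or_lt_of_le hyj with h | h
          · exact h
          · exact absurd h (hgap2 y (lt_of_le_of_lt hix hxy)).not_gt
        refine ⟨{i, j, k}, hTri, ?_, ?_⟩
        · simp [hxi]
        · simp [hyj']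
    · have hjx : j ≤ x := by
        by_contra h
        push_neg at h
        exact hcov j ⟨h, hjy⟩
      by_cases hgap2 : ∃ v, j < v ∧ v < k
      · exact ih j k (by omega) hjkM hjk hgap2 x y hjx hxy hyk hcov
      · push_neg at hgap2
        have hxj : x = j := by
          rcases eq_or_lt_of_le hjx with h | h
          · exact h.symm
          · exact absurd (hxy.trans_le hyk) (hgap2 x h).not_gt
        have hyk' : y = k := by
          rcases eq_or_lt_of_le hyk with h | h
          · exact h
          · exact absurd h (hgap2 y (lt_of_le_of_lt hjx hxy)).not_gt
        refine ⟨{i, j, k}, hTri, ?_, ?_⟩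
        · simp [hxj]
        · simp [hyk']


lemma proj_coords {q q' : Fin 3 → ℝ} (h : projLast 2 q = projLast 2 q') :
    q 0 = q' 0 ∧ q 1 = q' 1 := by
  constructor
  · have := congrFun h 0
    simpa [projLast] using this
  · have := congrFun h 1
    simpa [projLast] using this

/-- If no edge of the triangle `{a,b,c}` left-crosses the edge `{x,y}`, then the lifted
edge lies below the lifted triangle over their common projection. -/
lemma height_edge_tri (ht : StrictMono t) {x y a b c : Fin n} (hxy : x < y)
    (hab : a < b) (hbc : b < c)
    (C1 : ¬(a < x ∧ x < b ∧ b < y)) (C3 : ¬(a < x ∧ x < c ∧ c < y)) :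
    HeightLE 2 t {x, y} {a, b, c} := by
  classical
  intro q hq q' hq' hproj
  obtain ⟨w, hw0, hw1, hwc⟩ := (mem_mcConv ht (by norm_num) {x, y} q).1 hq
  obtain ⟨μ, hμ0, hμ1, hμc⟩ := (mem_mcConv ht (by norm_num) {a, b, c} q').1 hq'
  have hxyne : x ≠ y := hxy.ne
  have hanb : a ∉ ({b, c} : Finset (Fin n)) := by
    simp [hab.ne, (hab.trans hbc).ne]
  have hbnc : b ∉ ({c} : Finset (Fin n)) := by simp [hbc.ne]
  set p : Fin 2 → ℝ := projLast 2 q with hpdef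
  have hp_w : ∀ i : Fin 2, p i = ∑ l ∈ ({x, y} : Finset (Fin n)), w l * t l ^ (i.1 + 1) := by
    intro i
    have := hwc i.castSucc
    simpa [hpdef, projLast, Fin.coe_castSucc] using this
  have hp_μ : ∀ i : Fin 2, p i = ∑ l ∈ ({a, b, c} : Finset (Fin n)), μ l * t l ^ (i.1 + 1) := by
    intro i
    have := hμc i.castSucc
    rw [hproj]
    simpa [projLast, Fin.coe_castSucc] using this
  -- edge functional identities
  have Eab_w := comb_eval₂ {x, y} w p hw1 hp_w (t a) (t b)
  have Eab_μ := comb_eval₂ {a, b, c} μ p hμ1 hp_μ (t a) (t b)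
  have Eac_w := comb_eval₂ {x, y} w p hw1 hp_w (t a) (t c)
  have Eac_μ := comb_eval₂ {a, b, c} μ p hμ1 hp_μ (t a) (t c)
  rw [Finset.sum_pair hxyne] at Eab_w Eac_w
  rw [show ({a, b, c} : Finset (Fin n)) = insert a (insert b {c}) from rfl,
    Finset.sum_insert hanb, Finset.sum_insert hbnc, Finset.sum_singleton] at Eab_μ Eac_μ
  have hwsum : w x + w y = 1 := by
    have := hw1
    rwa [Finset.sum_pair hxyne] at this
  have hwx0 : 0 ≤ w x := hw0 x (by simp)
  have hwy0 : 0 ≤ w y := hw0 y (by simp)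
  have hμa0 : 0 ≤ μ a := hμ0 a (by simp)
  have hμb0 : 0 ≤ μ b := hμ0 b (by simp)
  have hμc0 : 0 ≤ μ c := hμ0 c (by simp)
  have tab : t a < t b := ht hab
  have tbc : t b < t c := ht hbc
  have txy : t x < t y := ht hxy
  have hwx : w x = 1 - w y := by linarith
  rw [hwx] at Eab_w Eac_w
  -- signs
  have Hab : 0 ≤ (1 - w y) * ((t x - t a) * (t x - t b)) + w y * ((t y - t a) * (t y - t b)) := by
    have h1 : μ a * ((t a - t a) * (t a - t b)) = 0 := by ring
    have h2 : μ b * ((t b - t a) * (t b - t b)) = 0 := by ring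
    have h3 : 0 ≤ μ c * ((t c - t a) * (t c - t b)) := by
      apply mul_nonneg hμc0
      apply mul_nonneg <;> linarith
    linarith [Eab_w, Eab_μ]
  have Hac : (1 - w y) * ((t x - t a) * (t x - t c)) + w y * ((t y - t a) * (t y - t c)) ≤ 0 := by
    have h1 : μ a * ((t a - t a) * (t a - t c)) = 0 := by ring
    have h3 : μ c * ((t c - t a) * (t c - t c)) = 0 := by ring
    have h2 : μ b * ((t b - t a) * (t b - t c)) ≤ 0 := by
      apply mul_nonpos_of_nonneg_of_nonpos hμb0
      apply mul_nonpos_of_nonneg_of_nonpos <;> linarith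
    linarith [Eac_w, Eac_μ]
  have hu1 : w y ≤ 1 := by linarith
  -- transfer constraints
  have C1' : ¬(t a < t x ∧ t x < t b ∧ t b < t y) := by
    rintro ⟨r1, r2, r3⟩
    exact C1 ⟨ht.lt_iff_lt.1 r1, ht.lt_iff_lt.1 r2, ht.lt_iff_lt.1 r3⟩
  have C3' : ¬(t a < t x ∧ t x < t c ∧ t c < t y) := by
    rintro ⟨r1, r2, r3⟩
    exact C3 ⟨ht.lt_iff_lt.1 r1, ht.lt_iff_lt.1 r2, ht.lt_iff_lt.1 r3⟩
  have hcore := core_ineq tab tbc txy C1' C3' hwy0 hu1 Hab Hac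
  -- cubic functional
  have E3q := comb_eval₃ {x, y} w q hw1 hwc (t a) (t b) (t c)
  have E3q' := comb_eval₃ {a, b, c} μ q' hμ1 hμc (t a) (t b) (t c)
  rw [Finset.sum_pair hxyne] at E3q
  rw [show ({a, b, c} : Finset (Fin n)) = insert a (insert b {c}) from rfl,
    Finset.sum_insert hanb, Finset.sum_insert hbnc, Finset.sum_singleton] at E3q'
  obtain ⟨h0, h1⟩ := proj_coords hproj
  rw [← h0, ← h1] at E3q'
  have hlast : (Fin.last 2 : Fin 3) = 2 := rfl
  rw [hlast]
  rw [hwx] at E3q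
  have haz : μ a * ((t a - t a) * (t a - t b) * (t a - t c)) = 0 := by ring
  have hbz : μ b * ((t b - t a) * (t b - t b) * (t b - t c)) = 0 := by ring
  have hcz : μ c * ((t c - t a) * (t c - t b) * (t c - t c)) = 0 := by ring
  linarith [E3q, E3q', hcore, h0, h1, haz, hbz, hcz]

/-- If no edge of the triangle `{a,b,c}` is right-crossed by the edge `{x,y}`, then the
lifted triangle lies below the lifted edge over their common projection. -/
lemma height_tri_edge (ht : StrictMono t) {x y a b c : Fin n} (hxy : x < y)
    (hab : a < b) (hbc : b < c)
    (C2 : ¬(x < b ∧ b < y ∧ y < c)) (C3 : ¬(x < a ∧ a < y ∧ y < c)) :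
    HeightLE 2 t {a, b, c} {x, y} := by
  classical
  intro q hq q' hq' hproj
  obtain ⟨μ, hμ0, hμ1, hμc⟩ := (mem_mcConv ht (by norm_num) {a, b, c} q).1 hq
  obtain ⟨w, hw0, hw1, hwc⟩ := (mem_mcConv ht (by norm_num) {x, y} q').1 hq'
  have hxyne : x ≠ y := hxy.ne
  have hanb : a ∉ ({b, c} : Finset (Fin n)) := by
    simp [hab.ne, (hab.trans hbc).ne]
  have hbnc : b ∉ ({c} : Finset (Fin n)) := by simp [hbc.ne]
  set p : Fin 2 → ℝ := projLast 2 q with hpdef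
  have hp_μ : ∀ i : Fin 2, p i = ∑ l ∈ ({a, b, c} : Finset (Fin n)), μ l * t l ^ (i.1 + 1) := by
    intro i
    have := hμc i.castSucc
    simpa [hpdef, projLast, Fin.coe_castSucc] using this
  have hp_w : ∀ i : Fin 2, p i = ∑ l ∈ ({x, y} : Finset (Fin n)), w l * t l ^ (i.1 + 1) := by
    intro i
    have := hwc i.castSucc
    rw [hproj]
    simpa [projLast, Fin.coe_castSucc] using this
  have Ebc_w := comb_eval₂ {x, y} w p hw1 hp_w (t b) (t c)
  have Ebc_μ := comb_eval₂ {a, b, c} μ p hμ1 hp_μ (t b) (t c)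
  have Eac_w := comb_eval₂ {x, y} w p hw1 hp_w (t a) (t c)
  have Eac_μ := comb_eval₂ {a, b, c} μ p hμ1 hp_μ (t a) (t c)
  rw [Finset.sum_pair hxyne] at Ebc_w Eac_w
  rw [show ({a, b, c} : Finset (Fin n)) = insert a (insert b {c}) from rfl,
    Finset.sum_insert hanb, Finset.sum_insert hbnc, Finset.sum_singleton] at Ebc_μ Eac_μ
  have hwsum : w x + w y = 1 := by
    have := hw1
    rwa [Finset.sum_pair hxyne] at this
  have hwx0 : 0 ≤ w x := hw0 x (by simp)
  have hwy0 : 0 ≤ w y := hw0 y (by simp)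
  have hμa0 : 0 ≤ μ a := hμ0 a (by simp)
  have hμb0 : 0 ≤ μ b := hμ0 b (by simp)
  have hμc0 : 0 ≤ μ c := hμ0 c (by simp)
  have tab : t a < t b := ht hab
  have tbc : t b < t c := ht hbc
  have txy : t x < t y := ht hxy
  have hwx : w x = 1 - w y := by linarith
  rw [hwx] at Ebc_w Eac_w
  -- mirrored constraints
  have C1' : ¬(-t c < -t y ∧ -t y < -t b ∧ -t b < -t x) := by
    rintro ⟨r1, r2, r3⟩
    exact C2 ⟨ht.lt_iff_lt.1 (by linarith), ht.lt_iff_lt.1 (by linarith),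
      ht.lt_iff_lt.1 (by linarith)⟩
  have C3' : ¬(-t c < -t y ∧ -t y < -t a ∧ -t a < -t x) := by
    rintro ⟨r1, r2, r3⟩
    exact C3 ⟨ht.lt_iff_lt.1 (by linarith), ht.lt_iff_lt.1 (by linarith),
      ht.lt_iff_lt.1 (by linarith)⟩
  -- mirrored sign hypotheses
  have Hab' : 0 ≤ (1 - (1 - w y)) * ((-t y - -t c) * (-t y - -t b))
      + (1 - w y) * ((-t x - -t c) * (-t x - -t b)) := by
    have h2 : μ b * ((t b - t b) * (t b - t c)) = 0 := by ring
    have h3 : μ c * ((t c - t b) * (t c - t c)) = 0 := by ring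
    have h1 : 0 ≤ μ a * ((t a - t b) * (t a - t c)) := by
      apply mul_nonneg hμa0
      have e : (t a - t b) * (t a - t c) = (t b - t a) * (t c - t a) := by ring
      rw [e]
      apply mul_nonneg <;> linarith
    linarith [Ebc_w, Ebc_μ, h1, h2, h3]
  have Hac' : (1 - (1 - w y)) * ((-t y - -t c) * (-t y - -t a))
      + (1 - w y) * ((-t x - -t c) * (-t x - -t a)) ≤ 0 := by
    have h1 : μ a * ((t a - t a) * (t a - t c)) = 0 := by ring
    have h3 : μ c * ((t c - t a) * (t c - t c)) = 0 := by ring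
    have h2 : μ b * ((t b - t a) * (t b - t c)) ≤ 0 := by
      apply mul_nonpos_of_nonneg_of_nonpos hμb0
      apply mul_nonpos_of_nonneg_of_nonpos <;> linarith
    linarith [Eac_w, Eac_μ, h1, h2, h3]
  have hcore := core_ineq (show -t c < -t b by linarith) (show -t b < -t a by linarith)
    (show -t y < -t x by linarith) C1' C3' (by linarith : (0:ℝ) ≤ 1 - w y)
    (by linarith : 1 - w y ≤ 1) Hab' Hac'
  -- cubic functional
  have E3q := comb_eval₃ {a, b, c} μ q hμ1 hμc (t a) (t b) (t c)
  have E3q' := comb_eval₃ {x, y} w q' hw1 hwc (t a) (t b) (t c)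
  rw [Finset.sum_pair hxyne] at E3q'
  rw [show ({a, b, c} : Finset (Fin n)) = insert a (insert b {c}) from rfl,
    Finset.sum_insert hanb, Finset.sum_insert hbnc, Finset.sum_singleton] at E3q
  obtain ⟨h0, h1⟩ := proj_coords hproj
  rw [← h0, ← h1] at E3q'
  have hlast : (Fin.last 2 : Fin 3) = 2 := rfl
  rw [hlast]
  rw [hwx] at E3q'
  have haz : μ a * ((t a - t a) * (t a - t b) * (t a - t c)) = 0 := by ring
  have hbz : μ b * ((t b - t a) * (t b - t b) * (t b - t c)) = 0 := by ring
  have hcz : μ c * ((t c - t a) * (t c - t b) * (t c - t c)) = 0 := by ring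
  linarith [E3q, E3q', hcore, h0, h1, haz, hbz, hcz]

end Sep

/-- **Corollary (separating levels).** Let `E₁, E₂, E₃` be disjoint sets of edges on `γ₂`
admitting a linear order `e₁, …, e_m` such that edges of `E_i` precede edges of `E_j` for
`i < j`, earlier edges are `<₃`-below or non-crossing with later ones, and the edges of
`E₂` are mutually non-crossing. Then there is a triangulation `T` of `C(n,2)` with vertex
set `[n]` with `e ≤₃ T` for `e ∈ E₁`, `T ≤₃ e` for `e ∈ E₃`, and `e ∈ T` (as a face) for
`e ∈ E₂`. -/
theorem separating_level_triangulation
    (n m : ℕ) (hn : 3 ≤ n) (t : Fin n → ℝ) (ht : StrictMono t)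
    (E₁ E₂ E₃ : Finset (Finset (Fin n)))
    (hcard : ∀ e ∈ E₁ ∪ E₂ ∪ E₃, e.card = 2)
    (hd12 : Disjoint E₁ E₂) (hd13 : Disjoint E₁ E₃) (hd23 : Disjoint E₂ E₃)
    (e : Fin m → Finset (Fin n)) (hinj : Function.Injective e)
    (himg : Finset.image e Finset.univ = E₁ ∪ E₂ ∪ E₃)
    (horder : ∀ i j : Fin m,
      (e i ∈ E₁ → e j ∈ E₂ → i < j) ∧
      (e i ∈ E₁ → e j ∈ E₃ → i < j) ∧
      (e i ∈ E₂ → e j ∈ E₃ → i < j))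
    (hbelow : ∀ i j : Fin m, i < j →
      HeightLT 2 t (e i) (e j) ∨ ¬ Overlap 2 t (e i) (e j))
    (hE₂ : ∀ a ∈ E₂, ∀ b ∈ E₂, a ≠ b → ¬ Overlap 2 t a b) :
    ∃ T : Finset (Finset (Fin n)),
      IsTriangulation 2 t Finset.univ T ∧ UsesAllVertices Finset.univ T ∧
      (∀ a ∈ E₁, SimplexLE 2 t a T) ∧
      (∀ a ∈ E₃, TriLE 2 t T a) ∧
      (∀ a ∈ E₂, IsFaceOf a T) := by
  classical
  have hn0 : 0 < n := by omega
  set v0 : Fin n := ⟨0, hn0⟩ with hv0def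
  set vN : Fin n := ⟨n - 1, by omega⟩ with hvNdef
  have hv0N : v0 < vN := by
    simp only [Fin.lt_def, hv0def, hvNdef]
    omega
  -- edge representations
  have hedges : ∀ g ∈ E₁ ∪ E₂ ∪ E₃, ∃ a b : Fin n, a < b ∧ g = {a, b} := by
    intro g hg
    obtain ⟨u, v, huv, rfl⟩ := Finset.card_eq_two.1 (hcard g hg)
    rcases lt_or_gt_of_ne huv with h | h
    · exact ⟨u, v, h, rfl⟩
    · exact ⟨v, u, h, Finset.pair_comm u v⟩
  have hE₁edge : ∀ g ∈ E₁, ∃ a b : Fin n, a < b ∧ g = {a, b} := fun g hg =>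
    hedges g (by simp [hg])
  have hE₂edge : ∀ g ∈ E₂, ∃ a b : Fin n, a < b ∧ g = {a, b} := fun g hg =>
    hedges g (by simp [hg])
  have hE₃edge : ∀ g ∈ E₃, ∃ a b : Fin n, a < b ∧ g = {a, b} := fun g hg =>
    hedges g (by simp [hg])
  have hidx : ∀ g ∈ E₁ ∪ E₂ ∪ E₃, ∃ i : Fin m, e i = g := by
    intro g hg
    rw [← himg] at hg
    obtain ⟨i, _, hi⟩ := Finset.mem_image.1 hg
    exact ⟨i, hi⟩
  -- consistency facts
  have KA : ∀ g ∈ E₁, ∀ f, (f ∈ E₂ ∨ f ∈ E₃) → ¬ Sep.LeftX f g := by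
    intro g hg f hf hL
    obtain ⟨a, b, c, d, hab, hbc, hcd, hfeq, hgeq⟩ := hL
    obtain ⟨i, hi⟩ := hidx g (by simp [hg])
    obtain ⟨j, hj⟩ := hidx f (by rcases hf with h | h <;> simp [h])
    have hij : i < j := by
      rcases hf with h | h
      · exact (horder i j).1 (by rw [hi]; exact hg) (by rw [hj]; exact h)
      · exact (horder i j).2.1 (by rw [hi]; exact hg) (by rw [hj]; exact h)
    have hgeo := Sep.cross_geom ht hab hbc hcd
    rcases hbelow i j hij with hHL | hnov
    · rw [hi, hj, hgeq, hfeq] at hHL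
      exact hgeo.2.2 hHL.2
    · rw [hi, hj, hgeq, hfeq] at hnov
      exact hnov hgeo.2.1
  have KB : ∀ g ∈ E₂, ∀ f ∈ E₃, ¬ Sep.LeftX f g := by
    intro g hg f hf hL
    obtain ⟨a, b, c, d, hab, hbc, hcd, hfeq, hgeq⟩ := hL
    obtain ⟨i, hi⟩ := hidx g (by simp [hg])
    obtain ⟨j, hj⟩ := hidx f (by simp [hf])
    have hij : i < j := (horder i j).2.2 (by rw [hi]; exact hg) (by rw [hj]; exact hf)
    have hgeo := Sep.cross_geom ht hab hbc hcd
    rcases hbelow i j hij with hHL | hnov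
    · rw [hi, hj, hgeq, hfeq] at hHL
      exact hgeo.2.2 hHL.2
    · rw [hi, hj, hgeq, hfeq] at hnov
      exact hnov hgeo.2.1
  have KC : ∀ g ∈ E₂, ∀ f ∈ E₂, ¬ Sep.LeftX g f := by
    intro g hg f hf hL
    have hne : g ≠ f := Sep.leftX_ne hL
    obtain ⟨a, b, c, d, hab, hbc, hcd, hgeq, hfeq⟩ := hL
    have hgeo := Sep.cross_geom ht hab hbc hcd
    refine hE₂ g hg f hf hne ?_
    rw [hgeq, hfeq]
    exact hgeo.1
  have K1 : ∀ g ∈ E₁, ∀ f ∈ E₃, ¬ Sep.LeftX f g := fun g hg f hf => KA g hg f (Or.inr hf)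
  -- hull edges cross nothing
  have hullNC : ∀ x y : Fin n, x < y →
      ((∀ z, ¬(x < z ∧ z < y)) ∨ (x = v0 ∧ y = vN)) →
      ∀ h, ¬ Sep.LeftX {x, y} h ∧ ¬ Sep.LeftX h {x, y} := by
    intro x y hxy hc h
    constructor
    · rintro ⟨a, b, c, d, hab, hbc, hcd, heq, rfl⟩
      obtain ⟨rfl, rfl⟩ := Sep.pair_inj hxy (hab.trans hbc) heq
      rcases hc with hcov | ⟨rfl, rfl⟩
      · exact hcov b ⟨hab, hbc⟩
      · have h1 : d.1 < n := d.isLt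
        have h2 : vN.1 < d.1 := hcd
        simp only [hvNdef] at h2
        omega
    · rintro ⟨a, b, c, d, hab, hbc, hcd, rfl, heq⟩
      obtain ⟨rfl, rfl⟩ := Sep.pair_inj hxy (hbc.trans hcd) heq
      rcases hc with hcov | ⟨rfl, rfl⟩
      · exact hcov c ⟨hbc, hcd⟩
      · have h2 : a.1 < v0.1 := hab
        simp only [hv0def] at h2
        omega
  -- the collection of admissible noncrossing families
  set HullP : Finset (Fin n) → Prop := fun g => ∃ x y : Fin n, x < y ∧ g = {x, y} ∧
    ((∀ z, ¬(x < z ∧ z < y)) ∨ (x = v0 ∧ y = vN)) with hHullPdef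
  set ground : Finset (Finset (Fin n)) := Finset.univ.powerset.filter
    (fun g => (∃ a b : Fin n, a < b ∧ g = {a, b}) ∧
      (∀ e' ∈ E₁, ¬ Sep.LeftX g e') ∧ (∀ e' ∈ E₃, ¬ Sep.LeftX e' g)) with hground
  set Base : Finset (Finset (Fin n)) := E₂ ∪ Finset.univ.powerset.filter HullP with hBase
  set S : Finset (Finset (Finset (Fin n))) := ground.powerset.filter
    (fun M => Base ⊆ M ∧ ∀ g ∈ M, ∀ h ∈ M, ¬ Sep.LeftX g h) with hS
  have hBaseMem : ∀ g ∈ Base, (g ∈ E₂ ∨ HullP g) := by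
    intro g hg
    rw [hBase, Finset.mem_union, Finset.mem_filter] at hg
    rcases hg with h | h
    · exact Or.inl h
    · exact Or.inr h.2
  have hBaseGround : Base ⊆ ground := by
    intro g hg
    rw [hground, Finset.mem_filter]
    refine ⟨Finset.mem_powerset.2 (Finset.subset_univ _), ?_⟩
    rcases hBaseMem g hg with h | h
    · exact ⟨hE₂edge g h, fun e' he' => KA e' he' g (Or.inl h),
        fun e' he' hL => KB g h e' he' hL⟩
    · obtain ⟨x, y, hxy, rfl, hcase⟩ := h
      exact ⟨⟨x, y, hxy, rfl⟩, fun e' he' => (hullNC x y hxy hcase e').1,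
        fun e' he' => (hullNC x y hxy hcase e').2⟩
  have hBaseNC : ∀ g ∈ Base, ∀ h ∈ Base, ¬ Sep.LeftX g h := by
    intro g hg h hh
    rcases hBaseMem g hg with h1 | h1
    · rcases hBaseMem h hh with h2 | h2
      · exact KC g h1 h h2
      · obtain ⟨x, y, hxy, rfl, hcase⟩ := h2
        exact (hullNC x y hxy hcase g).2
    · obtain ⟨x, y, hxy, rfl, hcase⟩ := h1
      exact (hullNC x y hxy hcase h).1
  have hBaseS : Base ∈ S := by
    rw [hS, Finset.mem_filter]
    exact ⟨Finset.mem_powerset.2 hBaseGround, Finset.Subset.refl _, hBaseNC⟩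
  obtain ⟨M, hMS, hMmax'⟩ : ∃ M ∈ S, ∀ x ∈ S, ¬ M < x := by
    obtain ⟨M, hM⟩ := Finset.exists_maximal (s := S) ⟨Base, hBaseS⟩
    exact ⟨M, hM.1, fun x hx hlt => hlt.not_ge (hM.2 hx hlt.le)⟩
  rw [hS, Finset.mem_filter, Finset.mem_powerset] at hMS
  obtain ⟨hMground, hBaseM, hMnc⟩ := hMS
  have hMedge : ∀ g ∈ M, ∃ a b : Fin n, a < b ∧ g = {a, b} := by
    intro g hg
    have := hMground hg
    rw [hground, Finset.mem_filter] at this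
    exact this.2.1
  have hMA1 : ∀ g ∈ M, ∀ e' ∈ E₁, ¬ Sep.LeftX g e' := by
    intro g hg
    have := hMground hg
    rw [hground, Finset.mem_filter] at this
    exact this.2.2.1
  have hMA3 : ∀ g ∈ M, ∀ e' ∈ E₃, ¬ Sep.LeftX e' g := by
    intro g hg
    have := hMground hg
    rw [hground, Finset.mem_filter] at this
    exact this.2.2.2
  have hMmax : ∀ x y : Fin n, x < y → (∀ e' ∈ E₁, ¬ Sep.LeftX {x, y} e') →
      (∀ e' ∈ E₃, ¬ Sep.LeftX e' {x, y}) →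
      (∀ h ∈ M, ¬ Sep.LeftX {x, y} h ∧ ¬ Sep.LeftX h {x, y}) →
      ({x, y} : Finset (Fin n)) ∈ M := by
    intro x y hxy hA1 hA3 hnc
    by_contra hnotM
    have hins : insert ({x, y} : Finset (Fin n)) M ∈ S := by
      rw [hS, Finset.mem_filter, Finset.mem_powerset]
      refine ⟨?_, ?_, ?_⟩
      · intro g hg
        rcases Finset.mem_insert.1 hg with rfl | hg'
        · rw [hground, Finset.mem_filter]
          exact ⟨Finset.mem_powerset.2 (Finset.subset_univ _), ⟨x, y, hxy, rfl⟩, hA1, hA3⟩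
        · exact hMground hg'
      · exact hBaseM.trans (Finset.subset_insert _ _)
      · intro g hg h hh
        rcases Finset.mem_insert.1 hg with rfl | hg' <;>
          rcases Finset.mem_insert.1 hh with rfl | hh'
        · exact Sep.leftX_irrefl _
        · exact (hnc h hh').1
        · exact (hnc g hg').2
        · exact hMnc g hg' h hh'
    exact hMmax' _ hins (Finset.ssubset_insert hnotM)
  have hMcov : ∀ x y : Fin n, x < y → (∀ z, ¬(x < z ∧ z < y)) →
      ({x, y} : Finset (Fin n)) ∈ M := by
    intro x y hxy hcov
    apply hBaseM
    rw [hBase, Finset.mem_union, Finset.mem_filter]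
    exact Or.inr ⟨Finset.mem_powerset.2 (Finset.subset_univ _), x, y, hxy, rfl, Or.inl hcov⟩
  have hMtop : ({v0, vN} : Finset (Fin n)) ∈ M := by
    apply hBaseM
    rw [hBase, Finset.mem_union, Finset.mem_filter]
    exact Or.inr ⟨Finset.mem_powerset.2 (Finset.subset_univ _), v0, vN, hv0N, rfl,
      Or.inr ⟨rfl, rfl⟩⟩
  have hgapTop : ∃ v : Fin n, v0 < v ∧ v < vN := by
    refine ⟨⟨1, by omega⟩, ?_, ?_⟩
    · simp only [Fin.lt_def, hv0def]
      omega
    · simp only [Fin.lt_def, hvNdef]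
      omega
  have hbot : ∀ z : Fin n, ¬ z < v0 := by
    intro z hz
    have : z.1 < v0.1 := hz
    simp [hv0def] at this
  have htop : ∀ z : Fin n, ¬ vN < z := by
    intro z hz
    have h1 : vN.1 < z.1 := hz
    have h2 : z.1 < n := z.isLt
    simp only [hvNdef] at h1
    omega
  -- face lemma helper: every short edge inside the polygon lies in a triangle
  have hface : ∀ x y : Fin n, x < y → (∀ z, ¬(x < z ∧ z < y)) →
      ∃ σ ∈ Sep.TriSet M, x ∈ σ ∧ y ∈ σ := by
    intro x y hxy hcov
    refine Sep.face_aux hE₁edge hE₃edge K1 hMedge hMnc hMA1 hMA3 hMmax n v0 vN ?_ hMtop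
      hv0N hgapTop x y ?_ hxy ?_ hcov
    · simp only [hvNdef, hv0def]
      omega
    · exact not_lt.1 (hbot x)
    · exact not_lt.1 (htop y)
  refine ⟨Sep.TriSet M, ⟨?_, ?_, ?_⟩, ?_, ?_, ?_, ?_⟩
  · -- cards and subsets
    intro σ hσ
    obtain ⟨a, b, c, hab, hbc, rfl, _, _, _⟩ := Sep.mem_TriSet.1 hσ
    exact ⟨Sep.tri_card hab hbc, Finset.subset_univ _⟩
  · -- pairwise non-overlap
    intro σ hσ τ hτ hne hov
    apply hov
    rintro p ⟨hp1, hp2⟩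
    obtain ⟨a, b, c, hab, hbc, rfl, g1, g2, g3⟩ := Sep.mem_TriSet.1 hσ
    obtain ⟨a', b', c', h'ab, h'bc, rfl, f1, f2, f3⟩ := Sep.mem_TriSet.1 hτ
    exact Sep.tri_disjoint ht hMnc hab hbc h'ab h'bc g1 g2 g3 f1 f2 f3 hne p hp1 hp2
  · -- covering
    intro p hp
    refine Sep.cover_aux ht hE₁edge hE₃edge K1 hMedge hMnc hMA1 hMA3 hMmax n v0 vN ?_ hMtop
      hv0N hgapTop p hp ?_
    · simp only [hvNdef, hv0def]
      omega
    · exact Sep.polygon_sign_le ht hp hv0N hbot htop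
  · -- uses all vertices
    intro a _
    by_cases ha : a.1 < n - 1
    · obtain ⟨σ, hσ, h1, _⟩ := hface a ⟨a.1 + 1, by omega⟩
        (by simp only [Fin.lt_def]; omega)
        (by intro z hz
            have h1 : a.1 < z.1 := hz.1
            have h2 : z.1 < a.1 + 1 := hz.2
            omega)
      exact ⟨σ, hσ, h1⟩
    · have haN : a = vN := by
        apply Fin.ext
        have := a.isLt
        simp only [hvNdef]
        omega
      obtain ⟨σ, hσ, _, h2⟩ := hface ⟨n - 2, by omega⟩ a
        (by simp only [Fin.lt_def, haN, hvNdef]; omega)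
        (by intro z hz
            have h1 : n - 2 < z.1 := hz.1
            have h2 : z.1 < a.1 := hz.2
            have h3 := a.isLt
            omega)
      exact ⟨σ, hσ, h2⟩
  · -- E₁ below the triangulation
    intro g hg τ hτ
    obtain ⟨x, y, hxy, rfl⟩ := hE₁edge g hg
    obtain ⟨a, b, c, hab, hbc, rfl, g1, g2, g3⟩ := Sep.mem_TriSet.1 hτ
    refine Sep.height_edge_tri ht hxy hab hbc ?_ ?_
    · rintro ⟨r1, r2, r3⟩
      exact hMA1 _ g1 _ hg ((Sep.leftX_iff hab hxy).2 ⟨r1, r2, r3⟩)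
    · rintro ⟨r1, r2, r3⟩
      exact hMA1 _ g3 _ hg ((Sep.leftX_iff (hab.trans hbc) hxy).2 ⟨r1, r2, r3⟩)
  · -- triangulation below E₃
    intro g hg τ hτ
    obtain ⟨x, y, hxy, rfl⟩ := hE₃edge g hg
    obtain ⟨a, b, c, hab, hbc, rfl, g1, g2, g3⟩ := Sep.mem_TriSet.1 hτ
    refine Sep.height_tri_edge ht hxy hab hbc ?_ ?_
    · rintro ⟨r1, r2, r3⟩
      exact hMA3 _ g2 _ hg ((Sep.leftX_iff hxy hbc).2 ⟨r1, r2, r3⟩)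
    · rintro ⟨r1, r2, r3⟩
      exact hMA3 _ g3 _ hg ((Sep.leftX_iff hxy (hab.trans hbc)).2 ⟨r1, r2, r3⟩)
  · -- E₂ edges are faces
    intro g hg
    obtain ⟨x, y, hxy, hgeq⟩ := hE₂edge g hg
    have hgM : g ∈ M := hBaseM (by rw [hBase, Finset.mem_union]; exact Or.inl hg)
    by_cases hgap : ∃ v, x < v ∧ v < y
    · obtain ⟨j, hxj, hjy, hxjM, hjyM⟩ := Sep.struct hE₁edge hE₃edge K1 hMedge hMnc hMA1
        hMA3 hMmax (hgeq ▸ hgM) hxy hgap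
      refine ⟨{x, j, y}, Sep.mem_TriSet.2 ⟨x, j, y, hxj, hjy, rfl, hxjM, hjyM, hgeq ▸ hgM⟩, ?_⟩
      rw [hgeq]
      intro z hz
      rcases Finset.mem_insert.1 hz with rfl | hz'
      · simp
      · rw [Finset.mem_singleton.1 hz']
        simp
    · push_neg at hgap
      obtain ⟨σ, hσ, h1, h2⟩ := hface x y hxy (fun z hz => absurd hz.2 (hgap z hz.1).not_gt)
      refine ⟨σ, hσ, ?_⟩
      rw [hgeq]
      intro z hz
      rcases Finset.mem_insert.1 hz with rfl | hz'
      · exact h1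
      · rw [Finset.mem_singleton.1 hz']
        exact h2
end
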